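/- arXiv:2008.13459 — 10 statements merged into one kernel-verified Lean document; each statement's English description precedes it below -/
import Mathlib

section
/- The map f : ℕ \ {0} → ℝ defined by f(n) = (n!)^(1/n) / n is strictly decreasing and tends to 1/e as n → ∞; consequently (n!)^(1/n) > n/e for all positive integers n. -/
/-!
Write `(n!)^(1/n) / n = exp (log n! / n - log n)`. Strict decrease reduces, after clearing
denominators, to `n (n+1) log n - n² log (n+1) < log n!`, which follows from Stirling's lower
bound `log n! ≥ n log n - n + log (2πn) / 2` together with `log (1 + 1/n) ≥ 2 / (2n+1)` and
`2π > e`. The limit comes from the exact identity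
`log n! / n - log n = -1 + log sₙ / n + log (2n) / (2n)` for the Stirling sequence `sₙ → √π`.
Finally, a strictly decreasing sequence stays strictly above its limit, so `(n!)^(1/n) > n/e`.
-/

open Filter Real Topology
open scoped Nat

lemma two_div_two_mul_add_one_le_log_one_add_inv {a : ℝ} (ha : 0 < a) :
    2 / (2 * a + 1) ≤ log (1 + a⁻¹) := by
  have h := le_hasSum (hasSum_log_one_add_inv ha) 0 fun k _ => by positivity
  simpa [div_eq_mul_inv] using h

lemma one_lt_log_two_mul_pi : 1 < log (2 * π) := by
  rw [lt_log_iff_exp_lt (by positivity)]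
  linarith [exp_one_lt_d9, pi_gt_three]

lemma mul_succ_mul_log_sub_sq_mul_log_succ_lt_log_factorial {n : ℕ} (hn : n ≠ 0) :
    n * (n + 1) * log n - n ^ 2 * log (n + 1) < log n ! := by
  have hn0 : (0 : ℝ) < n := by positivity
  have hsplit : log ((n : ℝ) + 1) = log n + log (1 + (n : ℝ)⁻¹) := by
    rw [← log_mul hn0.ne' (by positivity), mul_add, mul_inv_cancel₀ hn0.ne', mul_one, add_comm]
  have hlog1p : (n : ℝ) - 1 / 2 < n ^ 2 * log (1 + (n : ℝ)⁻¹) := by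
    calc (n : ℝ) - 1 / 2 < n ^ 2 * (2 / (2 * n + 1)) := by
          rw [mul_div_assoc', lt_div_iff₀ (by positivity)]; nlinarith
      _ ≤ _ := by gcongr; exact two_div_two_mul_add_one_le_log_one_add_inv hn0
  have hlogn : 0 ≤ log (n : ℝ) := log_natCast_nonneg n
  rw [hsplit]
  linarith [Stirling.le_log_factorial_stirling hn, one_lt_log_two_mul_pi]

lemma log_factorial_succ_div_sub_log_lt {n : ℕ} (hn : n ≠ 0) :
    log (n + 1)! / (n + 1 : ℕ) - log (n + 1 : ℕ) < log n ! / n - log n := by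
  have hn0 : (0 : ℝ) < n := by positivity
  rw [Nat.factorial_succ, Nat.cast_mul, log_mul (by positivity) (by positivity)]
  push_cast
  rw [div_sub' (by positivity), div_sub' hn0.ne', div_lt_div_iff₀ (by positivity) hn0]
  nlinarith [mul_succ_mul_log_sub_sq_mul_log_succ_lt_log_factorial hn]

lemma log_factorial_div_sub_log_eq {n : ℕ} (hn : n ≠ 0) :
    log n ! / n - log n = -1 + log (Stirling.stirlingSeq n) / n + log (2 * n) / (2 * n) := by
  have hn0 : (0 : ℝ) < n := by positivity
  rw [Stirling.log_stirlingSeq_formula, log_div hn0.ne' (exp_pos 1).ne', log_exp]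
  field_simp
  ring

lemma tendsto_log_factorial_div_sub_log :
    Tendsto (fun n : ℕ => log n ! / n - log n) atTop (𝓝 (-1)) := by
  have hstirling : Tendsto (fun n : ℕ => log (Stirling.stirlingSeq n) / n) atTop (𝓝 0) :=
    ((continuousAt_log (by positivity)).tendsto.comp Stirling.tendsto_stirlingSeq_sqrt_pi).div_atTop
      tendsto_natCast_atTop_atTop
  have hlog : Tendsto (fun n : ℕ => log (2 * n) / (2 * n)) atTop (𝓝 0) :=
    isLittleO_log_id_atTop.tendsto_div_nhds_zero.comp
      (tendsto_natCast_atTop_atTop.const_mul_atTop two_pos)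
  have h := (tendsto_const_nhds (x := (-1 : ℝ))).add hstirling |>.add hlog
  rw [add_zero, add_zero] at h
  refine h.congr' ?_
  filter_upwards [eventually_ne_atTop 0] with n hn
  exact (log_factorial_div_sub_log_eq hn).symm

lemma factorial_rpow_one_div_div_eq_exp {n : ℕ} (hn : n ≠ 0) :
    (n ! : ℝ) ^ ((1 : ℝ) / n) / n = exp (log n ! / n - log n) := by
  rw [rpow_def_of_pos (by positivity), exp_sub, exp_log (by positivity)]
  ring_nf

lemma StrictAntiOn.lt_of_tendsto {α : Type*} [Preorder α] [TopologicalSpace α]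
    [OrderClosedTopology α] {f : ℕ → α} {a : α} {k : ℕ} (hf : StrictAntiOn f (Set.Ici k))
    (hlim : Tendsto f atTop (𝓝 a)) {n : ℕ} (hn : k ≤ n) : a < f n := by
  have hle : a ≤ f (n + 1) := le_of_tendsto hlim <| by
    filter_upwards [eventually_ge_atTop (n + 1)] with m hm
    exact hf.antitoneOn (Set.mem_Ici.mpr (by omega)) (Set.mem_Ici.mpr (by omega)) hm
  exact hle.trans_lt (hf hn (Set.mem_Ici.mpr (by omega)) (lt_add_one n))

/-- The map `n ↦ (n!)^(1/n) / n` is strictly decreasing on positive integers,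
tends to `1/e`, and consequently `(n!)^(1/n) > n/e` for all positive `n`. -/
theorem stmt0 :
    StrictAntiOn (fun n : ℕ => (Nat.factorial n : ℝ) ^ ((1 : ℝ) / n) / n)
      {n : ℕ | 1 ≤ n} ∧
    Tendsto (fun n : ℕ => (Nat.factorial n : ℝ) ^ ((1 : ℝ) / n) / n) atTop
      (nhds (1 / Real.exp 1)) ∧
    ∀ n : ℕ, 1 ≤ n → (Nat.factorial n : ℝ) ^ ((1 : ℝ) / n) > (n : ℝ) / Real.exp 1 := by
  have hexp : ∀ n ∈ Set.Ici 1, (n ! : ℝ) ^ ((1 : ℝ) / n) / n = exp (log n ! / n - log n) :=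
    fun n hn => factorial_rpow_one_div_div_eq_exp (Nat.one_le_iff_ne_zero.mp hn)
  have hanti : StrictAntiOn (fun n : ℕ => (n ! : ℝ) ^ ((1 : ℝ) / n) / n) (Set.Ici 1) :=
    strictAntiOn_of_add_one_lt Set.ordConnected_Ici fun n _ hn hn1 => by
      rw [hexp n hn, hexp (n + 1) hn1]
      exact exp_lt_exp.mpr (log_factorial_succ_div_sub_log_lt (Nat.one_le_iff_ne_zero.mp hn))
  have hlim : Tendsto (fun n : ℕ => (n ! : ℝ) ^ ((1 : ℝ) / n) / n) atTop (𝓝 (1 / exp 1)) := by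
    rw [one_div, ← exp_neg]
    refine ((continuous_exp.tendsto _).comp tendsto_log_factorial_div_sub_log).congr' ?_
    filter_upwards [eventually_ge_atTop 1] with n hn
    exact (hexp n hn).symm
  refine ⟨hanti, hlim, fun n hn => ?_⟩
  have h := (lt_div_iff₀ (by positivity)).mp (hanti.lt_of_tendsto hlim hn)
  rwa [one_div_mul_eq_div] at h
end

section
/- If a point set S is a ρ-saturating set of PG(n,q) with ρ ≤ n, then |S| > ((ρ+1)/e) · q^((n-ρ)/(ρ+1)) + ρ/2, where e is Euler's number. -/
/-! The at most `C(|S|, ρ+1)` subspaces spanned by `ρ+1` points of `S` cover `F^(n+1)` and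
each has at most `q^(ρ+1)` vectors, so `q^(n-ρ) ≤ C(|S|, ρ+1)`. With `k = ρ+1`, Stirling's
`k! > (k/e)^k` and AM-GM in the form `s(s-1)⋯(s-k+1) ≤ (s-(k-1)/2)^k` turn this into
`(k/e) q^((n-ρ)/k) < |S| - (k-1)/2`. -/

/-- A point set `S` of `PG(n,q)` (modelled as the projectivization of `F^(n+1)` for a
finite field `F` of order `q`) `ρ`-saturates every point: each point lies in a subspace
spanned by at most `ρ+1` points of `S` (i.e. of projective dimension at most `ρ`). -/
def Saturates (F : Type*) [Field F] {V : Type*} [AddCommGroup V] [Module F V]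
    (ρ : ℕ) (S : Set (Projectivization F V)) : Prop :=
  ∀ P : Projectivization F V, ∃ T : Finset (Projectivization F V),
    ↑T ⊆ S ∧ T.card ≤ ρ + 1 ∧
      P.rep ∈ Submodule.span F (Projectivization.rep '' (↑T : Set (Projectivization F V)))

open Finset Module Submodule

lemma Nat.descFactorial_le_pow_sub_half {s k : ℕ} (hks : k ≤ s) :
    (s.descFactorial k : ℝ) ≤ ((s : ℝ) - ((k : ℝ) - 1) / 2) ^ k := by
  rcases Nat.eq_zero_or_pos k with rfl | hk
  · simp
  have hfactor_nonneg : ∀ i ∈ range k, (0 : ℝ) ≤ s - i := fun i hi =>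
    sub_nonneg.2 (by exact_mod_cast (mem_range.1 hi).le.trans hks)
  have hprod : (s.descFactorial k : ℝ) = ∏ i ∈ range k, ((s : ℝ) - i) := by
    rw [Nat.descFactorial_eq_prod_range, Nat.cast_prod]
    exact prod_congr rfl fun i hi => Nat.cast_sub ((mem_range.1 hi).le.trans hks)
  have hsum : ∑ i ∈ range k, ((s : ℝ) - i) = k * ((s : ℝ) - ((k : ℝ) - 1) / 2) := by
    have hgauss := congrArg (Nat.cast : ℕ → ℝ) (sum_range_id_mul_two k)
    push_cast [Nat.cast_sub hk] at hgauss
    rw [sum_sub_distrib, sum_const, card_range, nsmul_eq_mul]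
    linarith
  have hamgm := Real.geom_mean_le_arith_mean (range k) (fun _ => 1) (fun i => (s : ℝ) - i)
    (by simp) (by simpa using hk) hfactor_nonneg
  simp only [Real.rpow_one, sum_const, card_range, nsmul_eq_mul, mul_one, one_mul] at hamgm
  rw [hsum, mul_div_cancel_left₀ _ (Nat.cast_ne_zero.2 hk.ne')] at hamgm
  rw [hprod, ← Real.rpow_inv_natCast_pow (prod_nonneg hfactor_nonneg) hk.ne']
  exact pow_le_pow_left₀ (Real.rpow_nonneg (prod_nonneg hfactor_nonneg) _) hamgm k

lemma Nat.pow_div_exp_lt_factorial {k : ℕ} (hk : k ≠ 0) :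
    ((k : ℝ) / Real.exp 1) ^ k < k.factorial := by
  have hk1 : (1 : ℝ) ≤ k := by exact_mod_cast Nat.one_le_iff_ne_zero.2 hk
  have hsqrt : 1 < √(2 * Real.pi * k) :=
    (Real.lt_sqrt zero_le_one).2 (by nlinarith [Real.pi_gt_three])
  calc ((k : ℝ) / Real.exp 1) ^ k < √(2 * Real.pi * k) * ((k : ℝ) / Real.exp 1) ^ k :=
        lt_mul_of_one_lt_left (by positivity) hsqrt
    _ ≤ k.factorial := Stirling.le_factorial_stirling k

lemma Nat.choose_mul_pow_div_exp_lt {s k : ℕ} (hk : k ≠ 0) (hks : k ≤ s) :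
    (s.choose k : ℝ) * ((k : ℝ) / Real.exp 1) ^ k < ((s : ℝ) - ((k : ℝ) - 1) / 2) ^ k :=
  calc (s.choose k : ℝ) * ((k : ℝ) / Real.exp 1) ^ k < s.choose k * k.factorial :=
        mul_lt_mul_of_pos_left (Nat.pow_div_exp_lt_factorial hk)
          (by exact_mod_cast Nat.choose_pos hks)
    _ = s.descFactorial k := by
        rw [Nat.descFactorial_eq_factorial_mul_choose, mul_comm]; push_cast; rfl
    _ ≤ _ := Nat.descFactorial_le_pow_sub_half hks

lemma lt_of_pow_le_choose {q : ℝ} (hq : 0 ≤ q) {m s k : ℕ} (hk : k ≠ 0) (hks : k ≤ s)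
    (h : q ^ m ≤ s.choose k) :
    (k : ℝ) / Real.exp 1 * q ^ ((m : ℝ) / k) + ((k : ℝ) - 1) / 2 < s := by
  have hks' : (k : ℝ) ≤ s := by exact_mod_cast hks
  have hpow : ((k : ℝ) / Real.exp 1 * q ^ ((m : ℝ) / k)) ^ k
      < ((s : ℝ) - ((k : ℝ) - 1) / 2) ^ k :=
    calc ((k : ℝ) / Real.exp 1 * q ^ ((m : ℝ) / k)) ^ k
        = q ^ m * ((k : ℝ) / Real.exp 1) ^ k := by
          rw [mul_pow, ← Real.rpow_natCast (q ^ _) k, ← Real.rpow_mul hq,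
            div_mul_cancel₀ _ (Nat.cast_ne_zero.2 hk), Real.rpow_natCast, mul_comm]
      _ ≤ s.choose k * ((k : ℝ) / Real.exp 1) ^ k := by gcongr
      _ < _ := Nat.choose_mul_pow_div_exp_lt hk hks
  have := (pow_lt_pow_iff_left₀ (by positivity) (by linarith) hk).1 hpow
  linarith

section Saturating

variable {F V : Type*} [Field F] [AddCommGroup V] [Module F V]

instance Projectivization.finite [Finite V] : Finite (Projectivization F V) :=
  Quotient.finite _

lemma Projectivization.rep_mk_mem_iff (W : Submodule F V) {v : V} (hv : v ≠ 0) :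
    (mk F v hv).rep ∈ W ↔ v ∈ W := by
  obtain ⟨a, ha⟩ := exists_smul_eq_mk_rep F v hv
  rw [← ha, W.smul_mem_iff']

lemma finrank_span_image_finset_le_card {ι : Type*} (f : ι → V) (T : Finset ι) :
    finrank F (span F (f '' T)) ≤ #T := by
  classical
  rw [← coe_image]
  exact (finrank_span_finset_le_card _).trans card_image_le

lemma card_le_card_mul_pow_of_forall_mem_span [Fintype F] [Fintype V] {ι : Type*}
    (f : ι → V) (𝒯 : Finset (Finset ι)) {k : ℕ} (h𝒯 : ∀ T ∈ 𝒯, #T ≤ k)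
    (hcover : ∀ v : V, ∃ T ∈ 𝒯, v ∈ span F (f '' T)) :
    Fintype.card V ≤ #𝒯 * Fintype.card F ^ k := by
  classical
  calc Fintype.card V = #(univ : Finset V) := card_univ.symm
    _ ≤ #(𝒯.biUnion fun T => (span F (f '' T) : Set V).toFinset) :=
        card_le_card fun v _ => by
          obtain ⟨T, hT, hv⟩ := hcover v
          exact mem_biUnion.2 ⟨T, hT, Set.mem_toFinset.2 hv⟩
    _ ≤ #𝒯 * Fintype.card F ^ k := card_biUnion_le_card_mul _ _ _ fun T hT => by
        rw [Set.toFinset_card, ← Nat.card_eq_fintype_card, SetLike.coe_sort_coe,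
          natCard_eq_pow_finrank (K := F), Nat.card_eq_fintype_card]
        exact pow_le_pow_right₀ Fintype.card_pos
          ((finrank_span_image_finset_le_card f T).trans (h𝒯 T hT))

variable {ρ : ℕ} {S : Set (Projectivization F V)}

lemma Saturates.exists_mem_span (hS : Saturates F ρ S) (v : V) :
    ∃ T : Finset (Projectivization F V), ↑T ⊆ S ∧ #T ≤ ρ + 1 ∧
      v ∈ span F (Projectivization.rep '' (T : Set (Projectivization F V))) := by
  by_cases hv : v = 0
  · exact ⟨∅, by simp, by simp, hv ▸ zero_mem _⟩
  obtain ⟨T, hTS, hTcard, hT⟩ := hS (Projectivization.mk F v hv)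
  exact ⟨T, hTS, hTcard, (Projectivization.rep_mk_mem_iff _ hv).1 hT⟩

lemma Saturates.finrank_le_ncard (hS : Saturates F ρ S) (hfin : S.Finite) :
    finrank F V ≤ S.ncard := by
  have htop :
      span F (Projectivization.rep '' (↑hfin.toFinset : Set (Projectivization F V))) = ⊤ := by
    refine eq_top_iff.2 fun v _ => ?_
    obtain ⟨T, hTS, -, hv⟩ := hS.exists_mem_span v
    rw [hfin.coe_toFinset]
    exact span_mono (Set.image_mono hTS) hv
  rw [← finrank_top F V, ← htop, Set.ncard_eq_toFinset_card S hfin]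
  exact finrank_span_image_finset_le_card _ _

/-- The paper's count `θ_n ≤ C(|S|, ρ+1) θ_ρ`, with vectors in place of projective points. -/
lemma Saturates.card_le_choose_mul_pow [Fintype F] [Fintype V] (hS : Saturates F ρ S)
    (hρ : ρ < finrank F V) :
    Fintype.card V ≤ S.ncard.choose (ρ + 1) * Fintype.card F ^ (ρ + 1) := by
  have hfin : S.Finite := S.toFinite
  have hcard : ρ + 1 ≤ #hfin.toFinset := by
    rw [← Set.ncard_eq_toFinset_card S hfin]
    exact hρ.trans_le (hS.finrank_le_ncard hfin)
  rw [Set.ncard_eq_toFinset_card S hfin, ← card_powersetCard]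
  refine card_le_card_mul_pow_of_forall_mem_span Projectivization.rep _
    (fun T hT => (mem_powersetCard.1 hT).2.le) fun v => ?_
  obtain ⟨T, hTS, hTcard, hv⟩ := hS.exists_mem_span v
  obtain ⟨T', hTT', hT'S, hT'card⟩ :=
    exists_subsuperset_card_eq (by simpa using hTS) hTcard hcard
  exact ⟨T', mem_powersetCard.2 ⟨hT'S, hT'card⟩,
    span_mono (Set.image_mono (by simpa using hTT')) hv⟩

lemma Saturates.pow_finrank_sub_le_choose [Fintype F] [Fintype V] (hS : Saturates F ρ S)
    (hρ : ρ < finrank F V) :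
    Fintype.card F ^ (finrank F V - (ρ + 1)) ≤ S.ncard.choose (ρ + 1) := by
  have hcount := hS.card_le_choose_mul_pow hρ
  rw [card_eq_pow_finrank (K := F), ← Nat.sub_add_cancel hρ, pow_add] at hcount
  exact Nat.le_of_mul_le_mul_right hcount (pow_pos Fintype.card_pos _)

end Saturating

/-- If `S` is a `ρ`-saturating set of `PG(n,q)` with `ρ ≤ n`, then
`|S| > ((ρ+1)/e) · q^((n-ρ)/(ρ+1)) + ρ/2`. -/
theorem stmt3 (F : Type*) [Field F] [Fintype F] (n ρ : ℕ) (hρn : ρ ≤ n)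
    (S : Set (Projectivization F (Fin (n + 1) → F))) (hS : Saturates F ρ S) :
    ((ρ : ℝ) + 1) / Real.exp 1 *
        (Fintype.card F : ℝ) ^ (((n : ℝ) - ρ) / ((ρ : ℝ) + 1)) + (ρ : ℝ) / 2
      < (S.ncard : ℝ) := by
  have hfinrank : finrank F (Fin (n + 1) → F) = n + 1 := finrank_fin_fun F
  have hρ : ρ < finrank F (Fin (n + 1) → F) := by omega
  have hchoose := hS.pow_finrank_sub_le_choose hρ
  rw [hfinrank, show n + 1 - (ρ + 1) = n - ρ by omega] at hchoose
  have hcard : ρ + 1 ≤ S.ncard := hρ.trans_le (hS.finrank_le_ncard S.toFinite)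
  have key := lt_of_pow_le_choose (Nat.cast_nonneg (Fintype.card F)) ρ.succ_ne_zero hcard
    (by exact_mod_cast hchoose)
  push_cast [Nat.cast_sub hρn] at key
  linarith
end

section
/- The minimum size of saturating sets satisfies the recursive bound s_q(n₁+n₂+1, ρ₁+ρ₂+1) ≤ s_q(n₁,ρ₁) + s_q(n₂,ρ₂). -/
/-- `s_q(n,ρ)`: the minimum cardinality of a `ρ`-saturating set of `PG(n,q)`. -/
noncomputable def satMin (F : Type*) [Field F] [Fintype F] (n ρ : ℕ) : ℕ :=
  sInf {k | ∃ S : Set (Projectivization F (Fin (n + 1) → F)),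
    Saturates F ρ S ∧ S.ncard = k}

open Projectivization in
lemma sat_univ (F : Type*) [Field F] {V : Type*} [AddCommGroup V] [Module F V]
    [Nontrivial V] (ρ : ℕ) : Saturates F ρ (Set.univ : Set (Projectivization F V)) := by
  intro P
  refine ⟨{P}, by simp, by simp, ?_⟩
  apply Submodule.subset_span
  simp

open Projectivization in
lemma sat_push (F : Type*) [Field F] {V W : Type*} [AddCommGroup V] [Module F V]
    [AddCommGroup W] [Module F W] {ρ : ℕ} {S : Set (Projectivization F V)}
    (hS : Saturates F ρ S) (f : V →ₗ[F] W) (hf : Function.Injective f) (u : V) :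
    ∃ T : Finset (Projectivization F W),
      ↑T ⊆ Projectivization.map f hf '' S ∧ T.card ≤ ρ + 1 ∧
        f u ∈ Submodule.span F (Projectivization.rep '' (↑T : Set (Projectivization F W))) := by
  by_cases hu : u = 0
  · exact ⟨∅, by simp, by simp, by simp [hu]⟩
  obtain ⟨T₀, hT₀S, hcard, hmem⟩ := hS (Projectivization.mk F u hu)
  -- u is in the span of the reps of T₀
  obtain ⟨a, ha⟩ := Projectivization.exists_smul_eq_mk_rep F u hu
  have hu_mem : u ∈ Submodule.span F (Projectivization.rep '' (↑T₀ : Set (Projectivization F V))) := by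
    have : u = a⁻¹ • (Projectivization.mk F u hu).rep := by
      rw [← ha]; simp
    rw [this]
    exact Submodule.smul_mem _ _ hmem
  classical
  refine ⟨T₀.image (Projectivization.map f hf), ?_, ?_, ?_⟩
  · intro x hx
    simp only [Finset.coe_image, Set.mem_image, Finset.mem_coe] at hx
    obtain ⟨t, ht, rfl⟩ := hx
    exact ⟨t, hT₀S ht, rfl⟩
  · exact le_trans (Finset.card_image_le) hcard
  · have h1 : f u ∈ Submodule.span F (f '' (Projectivization.rep ''
        (↑T₀ : Set (Projectivization F V)))) := by
      rw [← Submodule.map_span]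
      exact Submodule.mem_map_of_mem hu_mem
    refine Submodule.span_le.2 ?_ h1
    rintro x ⟨y, ⟨t, ht, rfl⟩, rfl⟩
    have hnz : f t.rep ≠ 0 := fun h => t.rep_nonzero (hf (by simpa using h))
    have hmapt : Projectivization.map f hf t = Projectivization.mk F (f t.rep) hnz := by
      conv_lhs => rw [← Projectivization.mk_rep t]
      rw [Projectivization.map_mk]
    obtain ⟨b, hb⟩ := Projectivization.exists_smul_eq_mk_rep F (f t.rep) hnz
    have : f t.rep = b⁻¹ • (Projectivization.mk F (f t.rep) hnz).rep := by
      rw [← hb]; simp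
    rw [this, ← hmapt]
    refine Submodule.smul_mem _ _ (Submodule.subset_span ?_)
    exact ⟨Projectivization.map f hf t, by
      simp only [Finset.coe_image, Set.mem_image, Finset.mem_coe]; exact ⟨t, ht, rfl⟩, rfl⟩

/-- The recursive bound `s_q(n₁+n₂+1, ρ₁+ρ₂+1) ≤ s_q(n₁,ρ₁) + s_q(n₂,ρ₂)`. -/
theorem stmt6 (F : Type*) [Field F] [Fintype F] (n₁ n₂ ρ₁ ρ₂ : ℕ) :
    satMin F (n₁ + n₂ + 1) (ρ₁ + ρ₂ + 1) ≤ satMin F n₁ ρ₁ + satMin F n₂ ρ₂ := by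
  classical
  have hne₁ : {k | ∃ S : Set (Projectivization F (Fin (n₁ + 1) → F)),
      Saturates F ρ₁ S ∧ S.ncard = k}.Nonempty :=
    ⟨_, Set.univ, sat_univ F ρ₁, rfl⟩
  have hne₂ : {k | ∃ S : Set (Projectivization F (Fin (n₂ + 1) → F)),
      Saturates F ρ₂ S ∧ S.ncard = k}.Nonempty :=
    ⟨_, Set.univ, sat_univ F ρ₂, rfl⟩
  obtain ⟨S₁, hS₁, hc₁⟩ := Nat.sInf_mem hne₁
  obtain ⟨S₂, hS₂, hc₂⟩ := Nat.sInf_mem hne₂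
  -- the linear equivalence splitting the big space
  let ee : Fin (n₁ + n₂ + 1 + 1) ≃ (Fin (n₁ + 1) ⊕ Fin (n₂ + 1)) :=
    (finCongr (by omega)).trans finSumFinEquiv.symm
  let e : ((Fin (n₁ + 1) → F) × ((Fin (n₂ + 1)) → F)) ≃ₗ[F] (Fin (n₁ + n₂ + 1 + 1) → F) :=
    (LinearEquiv.sumArrowLequivProdArrow (Fin (n₁ + 1)) (Fin (n₂ + 1)) F F).symm.trans
      (LinearEquiv.funCongrLeft F F ee)
  let ι₁ : (Fin (n₁ + 1) → F) →ₗ[F] (Fin (n₁ + n₂ + 1 + 1) → F) :=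
    e.toLinearMap ∘ₗ LinearMap.inl F _ _
  let ι₂ : (Fin (n₂ + 1) → F) →ₗ[F] (Fin (n₁ + n₂ + 1 + 1) → F) :=
    e.toLinearMap ∘ₗ LinearMap.inr F _ _
  have hι₁ : Function.Injective ι₁ := e.injective.comp LinearMap.inl_injective
  have hι₂ : Function.Injective ι₂ := e.injective.comp LinearMap.inr_injective
  have hsplit : ∀ v : Fin (n₁ + n₂ + 1 + 1) → F,
      v = ι₁ (e.symm v).1 + ι₂ (e.symm v).2 := by
    intro v
    have : ((e.symm v).1, (0 : Fin (n₂ + 1) → F)) + ((0 : Fin (n₁ + 1) → F), (e.symm v).2)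
        = e.symm v := by
      ext <;> simp
    calc v = e (e.symm v) := (e.apply_symm_apply v).symm
      _ = e (((e.symm v).1, 0) + (0, (e.symm v).2)) := by rw [this]
      _ = ι₁ (e.symm v).1 + ι₂ (e.symm v).2 := by
          rw [map_add]; rfl
  set S : Set (Projectivization F (Fin (n₁ + n₂ + 1 + 1) → F)) :=
    (Projectivization.map ι₁ hι₁ '' S₁) ∪ (Projectivization.map ι₂ hι₂ '' S₂) with hSdef
  have hsat : Saturates F (ρ₁ + ρ₂ + 1) S := by
    intro P
    obtain ⟨T₁, hT₁S, hT₁c, hT₁m⟩ := sat_push F hS₁ ι₁ hι₁ (e.symm P.rep).1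
    obtain ⟨T₂, hT₂S, hT₂c, hT₂m⟩ := sat_push F hS₂ ι₂ hι₂ (e.symm P.rep).2
    refine ⟨T₁ ∪ T₂, ?_, ?_, ?_⟩
    · intro x hx
      rcases Finset.mem_union.1 (by exact_mod_cast hx) with h | h
      · exact Or.inl (hT₁S h)
      · exact Or.inr (hT₂S h)
    · calc (T₁ ∪ T₂).card ≤ T₁.card + T₂.card := Finset.card_union_le _ _
        _ ≤ (ρ₁ + 1) + (ρ₂ + 1) := Nat.add_le_add hT₁c hT₂c
        _ = (ρ₁ + ρ₂ + 1) + 1 := by ring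
    · rw [hsplit P.rep]
      have m1 : Submodule.span F (Projectivization.rep '' (↑T₁ : Set (Projectivization F (Fin (n₁ + n₂ + 1 + 1) → F)))) ≤
          Submodule.span F (Projectivization.rep '' (↑(T₁ ∪ T₂) : Set (Projectivization F (Fin (n₁ + n₂ + 1 + 1) → F)))) := by
        apply Submodule.span_mono
        apply Set.image_mono
        intro x hx
        exact_mod_cast Finset.mem_union_left _ (by exact_mod_cast hx)
      have m2 : Submodule.span F (Projectivization.rep '' (↑T₂ : Set (Projectivization F (Fin (n₁ + n₂ + 1 + 1) → F)))) ≤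
          Submodule.span F (Projectivization.rep '' (↑(T₁ ∪ T₂) : Set (Projectivization F (Fin (n₁ + n₂ + 1 + 1) → F)))) := by
        apply Submodule.span_mono
        apply Set.image_mono
        intro x hx
        exact_mod_cast Finset.mem_union_right _ (by exact_mod_cast hx)
      exact Submodule.add_mem _ (m1 hT₁m) (m2 hT₂m)
  haveI : Finite (Projectivization F (Fin (n₁ + n₂ + 1 + 1) → F)) := Quotient.finite _
  haveI : Finite (Projectivization F (Fin (n₁ + 1) → F)) := Quotient.finite _
  haveI : Finite (Projectivization F (Fin (n₂ + 1) → F)) := Quotient.finite _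
  have hle : satMin F (n₁ + n₂ + 1) (ρ₁ + ρ₂ + 1) ≤ S.ncard :=
    Nat.sInf_le ⟨S, hsat, rfl⟩
  calc satMin F (n₁ + n₂ + 1) (ρ₁ + ρ₂ + 1) ≤ S.ncard := hle
    _ ≤ (Projectivization.map ι₁ hι₁ '' S₁).ncard + (Projectivization.map ι₂ hι₂ '' S₂).ncard :=
        Set.ncard_union_le _ _
    _ ≤ S₁.ncard + S₂.ncard := Nat.add_le_add (Set.ncard_image_le) (Set.ncard_image_le)
    _ = satMin F n₁ ρ₁ + satMin F n₂ ρ₂ := by rw [hc₁, hc₂]; rfl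
end

section
/- If n+1 is a multiple of ρ+1, then s_q(n,ρ) ≤ (ρ+1)·θ_k with k = (n-ρ)/(ρ+1), where θ_k = (q^(k+1)-1)/(q-1). -/
/-- `θ_m = 1 + q + ⋯ + q^m = (q^(m+1)-1)/(q-1)`. -/
def thetaq (q m : ℕ) : ℕ := ∑ i ∈ Finset.range (m + 1), q ^ i

/-- A "normalized block vector": supported in the `j`-th block of `k+1` coordinates,
with entries `f` before the pivot position `t` (inside the block), `1` at the pivot, and
`0` after. -/
def blockVec (F : Type*) [Field F] (n k j t : ℕ) (f : ℕ → F) : Fin (n + 1) → F :=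
  fun i =>
    if i.val < j * (k + 1) then 0
    else if i.val - j * (k + 1) < t then f (i.val - j * (k + 1))
    else if i.val - j * (k + 1) = t then 1 else 0

lemma blockVec_ne_zero (F : Type*) [Field F] (n k j t : ℕ) (f : ℕ → F)
    (h : j * (k + 1) + t < n + 1) : blockVec F n k j t f ≠ 0 := by
  intro h0
  have h1 : blockVec F n k j t f ⟨j * (k + 1) + t, h⟩ = 1 := by
    simp only [blockVec]
    rw [if_neg (by omega), if_neg (by omega), if_pos (by omega)]
  rw [h0] at h1
  exact one_ne_zero h1.symm

/-- The index type parameterizing the saturating set. -/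
abbrev BlockCode (F : Type*) (ρ k : ℕ) : Type _ :=
  Fin (ρ + 1) × Σ t : Fin (k + 1), (Fin t.val → F)

/-- The point of `PG(n,q)` encoded by a block code. -/
noncomputable def gmap (F : Type*) [Field F] (n ρ k : ℕ) (hb : (ρ + 1) * (k + 1) = n + 1)
    (c : BlockCode F ρ k) : Projectivization F (Fin (n + 1) → F) :=
  Projectivization.mk F
    (blockVec F n k c.1.val c.2.1.val
      (fun s => if h : s < c.2.1.val then c.2.2 ⟨s, h⟩ else 0))
    (blockVec_ne_zero F n k _ _ _ (by
      have h1 : (c.1.val + 1) * (k + 1) ≤ (ρ + 1) * (k + 1) :=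
        Nat.mul_le_mul_right _ c.1.isLt
      have h2 : c.2.1.val < k + 1 := c.2.1.isLt
      have h3 : c.1.val * (k + 1) + (k + 1) = (c.1.val + 1) * (k + 1) := by ring
      omega))

set_option maxHeartbeats 2000000 in
/-- Any nonzero vector supported in block `j` gives a point in the range of `gmap`. -/
lemma mem_range_gmap (F : Type*) [Field F] (n ρ k : ℕ) (hb : (ρ + 1) * (k + 1) = n + 1)
    (j : ℕ) (v : Fin (n + 1) → F) (hv : v ≠ 0)
    (hsupp : ∀ i : Fin (n + 1), v i ≠ 0 →
      j * (k + 1) ≤ i.val ∧ i.val < j * (k + 1) + (k + 1)) :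
    Projectivization.mk F v hv ∈ Set.range (gmap F n ρ k hb) := by
  classical
  -- the support of v is nonempty
  have hvex : ∃ i, v i ≠ 0 := by
    by_contra hc
    push_neg at hc
    exact hv (funext hc)
  set supp : Finset (Fin (n + 1)) := Finset.univ.filter (fun i => v i ≠ 0) with hsuppdef
  have hne : supp.Nonempty := by
    obtain ⟨i, hi⟩ := hvex
    exact ⟨i, by simp [hsuppdef, hi]⟩
  set i₀ : Fin (n + 1) := supp.max' hne with hi₀def
  have hi₀v : v i₀ ≠ 0 := by
    have := supp.max'_mem hne
    simp [hsuppdef] at this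
    exact this
  have hmax : ∀ i : Fin (n + 1), v i ≠ 0 → i ≤ i₀ := by
    intro i hi
    exact Finset.le_max' supp i (by simp [hsuppdef, hi])
  obtain ⟨hlo, hhi⟩ := hsupp i₀ hi₀v
  set t₀ : ℕ := i₀.val - j * (k + 1) with ht₀def
  have ht₀lt : t₀ < k + 1 := by omega
  have hjn : j * (k + 1) ≤ n := by omega
  -- bounds needed to build indices
  have hjρ : j < ρ + 1 := by
    by_contra hc
    push_neg at hc
    have : (ρ + 1) * (k + 1) ≤ j * (k + 1) := Nat.mul_le_mul_right _ hc
    omega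
  -- the code
  refine ⟨⟨⟨j, hjρ⟩, ⟨⟨t₀, ht₀lt⟩,
    fun s => (v i₀)⁻¹ * v ⟨j * (k + 1) + s.val, by
      have hs : s.val < t₀ := s.isLt
      omega⟩⟩⟩, ?_⟩
  unfold gmap
  rw [Projectivization.mk_eq_mk_iff]
  refine ⟨Units.mk0 (v i₀)⁻¹ (inv_ne_zero hi₀v), funext fun i => ?_⟩
  simp only [Units.smul_def, Units.val_mk0, Pi.smul_apply, smul_eq_mul]
  by_cases h1 : i.val < j * (k + 1)
  · -- before the block: both sides 0
    rw [blockVec, if_pos h1]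
    have hvi : v i = 0 := by
      by_contra hc
      have := hsupp i hc
      omega
    rw [hvi, mul_zero]
  · push_neg at h1
    set d : ℕ := i.val - j * (k + 1) with hddef
    by_cases h2 : d < t₀
    · rw [blockVec, if_neg (by omega), if_pos (by omega)]
      rw [dif_pos (by omega : i.val - j * (k + 1) < t₀)]
      have hieq : (⟨j * (k + 1) + (i.val - j * (k + 1)), by omega⟩ : Fin (n + 1)) = i := by
        apply Fin.ext; simp; omega
      rw [hieq]
    · by_cases h3 : d = t₀
      · have hieq : i = i₀ := by apply Fin.ext; omega
        rw [blockVec, if_neg (by omega), if_neg (by omega), if_pos (by omega), hieq,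
          inv_mul_cancel₀ hi₀v]
      · -- after the pivot: both sides 0
        rw [blockVec, if_neg (by omega), if_neg (by omega), if_neg (by omega)]
        have hvi : v i = 0 := by
          by_contra hc
          have h4 := hsupp i hc
          have h5 : i.val ≤ i₀.val := hmax i hc
          omega
        rw [hvi, mul_zero]

/-- If `n+1` is a multiple of `ρ+1` (i.e. `n = k(ρ+1)+ρ` with `k = (n-ρ)/(ρ+1)`), then
`s_q(n,ρ) ≤ (ρ+1)·θ_k`. -/
theorem stmt7 (F : Type*) [Field F] [Fintype F] (n ρ k : ℕ)
    (hn : n = k * (ρ + 1) + ρ) :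
    satMin F n ρ ≤ (ρ + 1) * thetaq (Fintype.card F) k := by
  classical
  have hb : (ρ + 1) * (k + 1) = n + 1 := by
    have : (ρ + 1) * (k + 1) = k * (ρ + 1) + ρ + 1 := by ring
    omega
  set S : Set (Projectivization F (Fin (n + 1) → F)) := Set.range (gmap F n ρ k hb) with hSdef
  -- cardinality bound
  have hcard : S.ncard ≤ (ρ + 1) * thetaq (Fintype.card F) k := by
    have h1 : S = gmap F n ρ k hb '' Set.univ := by rw [Set.image_univ]
    have h2 : S.ncard ≤ (Set.univ : Set (BlockCode F ρ k)).ncard := by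
      rw [h1]; exact Set.ncard_image_le Set.finite_univ
    rw [Set.ncard_univ, Nat.card_eq_fintype_card] at h2
    refine h2.trans (le_of_eq ?_)
    rw [Fintype.card_prod, Fintype.card_fin]
    congr 1
    rw [Fintype.card_sigma]
    have : ∀ t : Fin (k + 1), Fintype.card (Fin t.val → F)
        = Fintype.card F ^ t.val := fun t => by
      rw [Fintype.card_fun, Fintype.card_fin]
    simp only [this]
    rw [thetaq, ← Fin.sum_univ_eq_sum_range (fun i => Fintype.card F ^ i) (k + 1)]
  -- saturation
  have hsat : Saturates F ρ S := by
    intro P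
    set v : Fin (n + 1) → F := P.rep with hvdef
    -- block components of v
    set vj : Fin (ρ + 1) → Fin (n + 1) → F := fun j i =>
      if j.val * (k + 1) ≤ i.val ∧ i.val < j.val * (k + 1) + (k + 1) then v i else 0
      with hvjdef
    have hsum : ∑ j : Fin (ρ + 1), vj j = v := by
      funext i
      rw [Finset.sum_apply]
      have hdiv : i.val / (k + 1) < ρ + 1 := by
        rw [Nat.div_lt_iff_lt_mul (by omega : 0 < k + 1)]
        have := i.isLt
        omega
      set j₀ : Fin (ρ + 1) := ⟨i.val / (k + 1), hdiv⟩ with hj₀def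
      rw [Finset.sum_eq_single j₀]
      · have h1 : j₀.val * (k + 1) ≤ i.val := Nat.div_mul_le_self _ _
        have h2 : i.val < j₀.val * (k + 1) + (k + 1) := by
          show i.val < i.val / (k + 1) * (k + 1) + (k + 1)
          exact Nat.lt_div_mul_add (by omega : 0 < k + 1)
        rw [hvjdef]
        simp only []
        rw [if_pos ⟨h1, h2⟩]
      · intro j _ hj
        rw [hvjdef]
        simp only []
        rw [if_neg]
        rintro ⟨ha, hb'⟩
        apply hj
        apply Fin.ext
        have : i.val / (k + 1) = j.val :=
          Nat.div_eq_of_lt_le ha (by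
            have hh : (j.val + 1) * (k + 1) = j.val * (k + 1) + (k + 1) := by ring
            omega)
        simp [hj₀def, this]
      · intro h
        exact absurd (Finset.mem_univ j₀) h
    -- the nonzero blocks
    set J : Finset (Fin (ρ + 1)) := Finset.univ.filter (fun j => vj j ≠ 0) with hJdef
    have hQmem : ∀ j (hj : vj j ≠ 0), Projectivization.mk F (vj j) hj ∈ S := by
      intro j hj
      rw [hSdef]
      apply mem_range_gmap F n ρ k hb j.val (vj j) hj
      intro i hi
      rw [hvjdef] at hi
      simp only [] at hi
      by_contra hc
      rw [if_neg (by tauto)] at hi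
      exact hi rfl
    set T : Finset (Projectivization F (Fin (n + 1) → F)) :=
      J.attach.image (fun x => Projectivization.mk F (vj x.1)
        (by have := Finset.mem_filter.1 x.2; exact this.2)) with hTdef
    refine ⟨T, ?_, ?_, ?_⟩
    · intro Q hQ
      rw [hTdef] at hQ
      simp only [Finset.coe_image, Set.mem_image, Finset.mem_coe, Finset.mem_attach,
        true_and] at hQ
      obtain ⟨⟨j, hj⟩, _, rfl⟩ := hQ
      exact hQmem j _
    · calc T.card ≤ J.attach.card := Finset.card_image_le
        _ = J.card := Finset.card_attach
        _ ≤ Finset.univ.card := Finset.card_filter_le _ _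
        _ = ρ + 1 := by rw [Finset.card_univ, Fintype.card_fin]
    · rw [← hsum]
      apply Submodule.sum_mem
      intro j _
      by_cases hj : vj j = 0
      · rw [hj]; exact Submodule.zero_mem _
      · set Q : Projectivization F (Fin (n + 1) → F) := Projectivization.mk F (vj j) hj
          with hQdef
        have hQT : Q ∈ T := by
          rw [hTdef]
          apply Finset.mem_image.2
          refine ⟨⟨j, ?_⟩, Finset.mem_attach _ _, rfl⟩
          rw [hJdef]
          exact Finset.mem_filter.2 ⟨Finset.mem_univ _, hj⟩
        obtain ⟨a, ha⟩ := Projectivization.exists_smul_eq_mk_rep F (vj j) hj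
        have hrep : Q.rep ∈ Submodule.span F
            (Projectivization.rep '' (↑T : Set (Projectivization F (Fin (n + 1) → F)))) :=
          Submodule.subset_span ⟨Q, hQT, rfl⟩
        have hvj : vj j = a⁻¹ • Q.rep := by
          rw [hQdef, ← ha, inv_smul_smul]
        rw [hvj]
        exact Submodule.smul_mem _ _ hrep
  -- conclude
  refine le_trans (Nat.sInf_le ⟨S, hsat, rfl⟩) hcard
end

section
/- For each frame of PG(m,q) with q = (q')^(ρ+1), there exists a unique q'-subgeometry of PG(m,q) containing each point of the frame. -/
def IsSubgeometry (K F : Type*) [Field K] [Field F] [Algebra K F] (m d : ℕ)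
    (B : Set (Projectivization F (Fin (m + 1) → F))) : Prop :=
  ∃ b : Fin (d + 1) → (Fin (m + 1) → F), LinearIndependent F b ∧
    B = {P | ∃ (v : Fin (m + 1) → F) (hv : v ≠ 0),
      v ∈ Submodule.span K (Set.range b) ∧ P = Projectivization.mk F v hv}

def IsFrame (F : Type*) [Field F] (m : ℕ)
    (f : Fin (m + 2) → Projectivization F (Fin (m + 1) → F)) : Prop :=
  Function.Injective f ∧
    ∀ i : Fin (m + 2),
      LinearIndependent F (fun j : {j : Fin (m + 2) // j ≠ i} => (f j).rep)

/-!
Normalize the frame: its first `m + 1` points are the points of a basis `b`, and its last point is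
`[∑ j, b j]` (every coordinate of the last point is nonzero, as any `m + 1` frame points are
independent). The `K`-span of `b` is then a subgeometry through the frame. Conversely, if the
`K`-span `N` of `m + 1` vectors contains multiples `t j • b j` and `a • ∑ j, b j`, the `t j • b j`
are `K`-independent, hence a `K`-basis of `N`; expanding `a • ∑ j, b j` in it and comparing
`F`-coordinates in `b` shows `t j ∈ a • Kˣ`, so `N = a • span K (range b)`, which has the same projective points.
-/

open Module Pointwise Set Submodule

theorem Submodule.span_range_units_smul {K V ι : Type*} [Semiring K] [AddCommMonoid V] [Module K V]
    (c : ι → Kˣ) (w : ι → V) : span K (range fun j => c j • w j) = span K (range w) := by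
  simp only [span_range_eq_iSup, span_singleton_group_smul_eq]

section projPoints

variable {K F V : Type*} [DivisionRing F] [AddCommGroup V] [Module F V]

variable (F) in
def Submodule.projPoints [Semiring K] [Module K V] (N : Submodule K V) :
    Set (Projectivization F V) :=
  {P | ∃ (v : V) (hv : v ≠ 0), v ∈ N ∧ P = Projectivization.mk F v hv}

theorem Submodule.mk_mem_projPoints_iff [Semiring K] [Module K V] {N : Submodule K V} {v : V}
    {hv : v ≠ 0} : Projectivization.mk F v hv ∈ N.projPoints F ↔ ∃ a : Fˣ, a • v ∈ N := by
  constructor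
  · rintro ⟨w, hw, hwN, hvw⟩
    obtain ⟨a, rfl⟩ := (Projectivization.mk_eq_mk_iff F w v hw hv).1 hvw.symm
    exact ⟨a, hwN⟩
  · rintro ⟨a, ha⟩
    refine ⟨a • v, smul_ne_zero a.ne_zero hv, ha, ?_⟩
    exact ((Projectivization.mk_eq_mk_iff F _ v _ hv).2 ⟨a, rfl⟩).symm

theorem Submodule.projPoints_units_smul [CommSemiring K] [Algebra K F] [Module K V] [IsScalarTower K F V]
    (a : Fˣ) (N : Submodule K V) : (a • N).projPoints F = N.projPoints F := by
  ext P
  rw [← Projectivization.mk_rep P, mk_mem_projPoints_iff, mk_mem_projPoints_iff]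
  simp only [Units.smul_def a, mem_smul_pointwise_iff_exists]
  constructor
  · rintro ⟨c, y, hy, hyc⟩
    refine ⟨a⁻¹ * c, ?_⟩
    rwa [mul_smul, ← hyc, ← Units.smul_def a, inv_smul_smul]
  · rintro ⟨c, hc⟩
    exact ⟨a * c, c • P.rep, hc, by rw [mul_smul, Units.smul_def a]⟩

end projPoints

section uniqueness

variable {K F V ι : Type*} [Field K] [DivisionRing F] [Algebra K F] [AddCommGroup V] [Module F V]
  [Module K V] [IsScalarTower K F V] [Fintype ι]

theorem Submodule.exists_eq_units_smul_span_of_smul_mem {b : ι → V} (hb : LinearIndependent F b)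
    {N : Submodule K V} [FiniteDimensional K N] (hN : finrank K N ≤ Fintype.card ι)
    (hpts : ∀ j, ∃ t : Fˣ, t • b j ∈ N) (hsum : ∃ a : Fˣ, a • ∑ j, b j ∈ N) :
    ∃ a : Fˣ, N = a • span K (range b) := by
  choose t ht using hpts
  obtain ⟨a, ha⟩ := hsum
  have hspan : span K (range fun j => t j • b j) = N := by
    have hK : LinearIndependent K fun j => t j • b j := (hb.units_smul t).restrict_scalars' K
    refine eq_of_le_of_finrank_le (span_le.2 (range_subset_iff.2 ht)) ?_
    rw [finrank_span_eq_card hK]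
    exact hN
  obtain ⟨μ, hμ⟩ := (mem_span_range_iff_exists_fun K).1 (hspan ▸ ha)
  have hcoeff : ∀ j, μ j • (t j : F) = a := by
    refine Fintype.linearIndependent_iffₛ.1 hb _ (fun _ => (a : F)) ?_
    simpa only [smul_assoc, ← Finset.smul_sum, Units.smul_def] using hμ
  have hμ0 : ∀ j, μ j ≠ 0 := fun j h => a.ne_zero (by rw [← hcoeff j, h, zero_smul])
  refine ⟨a, ?_⟩
  calc N = span K (range fun j => t j • b j) := hspan.symm
    _ = span K (range fun j => Units.mk0 (μ j) (hμ0 j) • t j • b j) :=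
      (span_range_units_smul _ _).symm
    _ = span K (a • range b) := by
      rw [smul_set_range]
      congr 2
      ext j : 1
      rw [Units.smul_def, Units.val_mk0, Units.smul_def, ← smul_assoc, hcoeff, Units.smul_def]
    _ = a • span K (range b) := span_smul _ _

end uniqueness

namespace IsFrame

variable {F : Type*} [Field F] {m : ℕ} {f : Fin (m + 2) → Projectivization F (Fin (m + 1) → F)}

theorem linearIndependent_castSucc (hf : IsFrame F m f) :
    LinearIndependent F fun j : Fin (m + 1) => (f j.castSucc).rep := by
  have hinj : Function.Injective fun j : Fin (m + 1) =>
      (⟨j.castSucc, (Fin.castSucc_lt_last j).ne⟩ : {k : Fin (m + 2) // k ≠ Fin.last (m + 1)}) :=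
    fun _ _ h => Fin.castSucc_injective _ (congrArg Subtype.val h)
  have hli := (hf.2 (Fin.last (m + 1))).comp _ hinj
  exact hli

noncomputable def basis (hf : IsFrame F m f) : Basis (Fin (m + 1)) F (Fin (m + 1) → F) :=
  basisOfLinearIndependentOfCardEqFinrank hf.linearIndependent_castSucc (by simp)

theorem basis_apply (hf : IsFrame F m f) (j : Fin (m + 1)) : hf.basis j = (f j.castSucc).rep := by
  rw [basis, coe_basisOfLinearIndependentOfCardEqFinrank]

theorem basis_repr_last_ne_zero (hf : IsFrame F m f) (j : Fin (m + 1)) :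
    hf.basis.repr (f (Fin.last _)).rep j ≠ 0 := by
  intro h
  have hmem : (f (Fin.last _)).rep ∈ span F (hf.basis '' {k | k ≠ j}) :=
    hf.basis.mem_span_image.2 fun k hk hkj => Finsupp.mem_support_iff.1 hk (hkj ▸ h)
  refine (hf.2 j.castSucc).notMem_span_image (s := {k | k.1 ≠ Fin.last _})
    (x := ⟨Fin.last _, (Fin.castSucc_lt_last j).ne'⟩) (by simp) (span_mono ?_ hmem)
  rintro _ ⟨k, hk, rfl⟩
  exact ⟨⟨k.castSucc, fun h => hk (Fin.castSucc_injective _ h)⟩, (Fin.castSucc_lt_last k).ne,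
    (hf.basis_apply k).symm⟩

theorem exists_basis_mk_eq (hf : IsFrame F m f) :
    ∃ b : Basis (Fin (m + 1)) F (Fin (m + 1) → F),
      (∀ j, f j.castSucc = Projectivization.mk F (b j) (b.ne_zero j)) ∧
      ∃ hb : ∑ j, b j ≠ 0, f (Fin.last _) = Projectivization.mk F (∑ j, b j) hb := by
  set t : Fin (m + 1) → Fˣ := fun j => Units.mk0 _ (hf.basis_repr_last_ne_zero j)
  have hsum : ∑ j, hf.basis.unitsSMul t j = (f (Fin.last _)).rep := by
    simp only [Basis.unitsSMul_apply, Units.smul_def, t, Units.val_mk0]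
    exact hf.basis.sum_repr _
  refine ⟨hf.basis.unitsSMul t, fun j => ?_, hsum ▸ (f _).rep_nonzero, ?_⟩
  · rw [← (f j.castSucc).mk_rep]
    refine ((Projectivization.mk_eq_mk_iff F _ _ _ _).2 ⟨t j, ?_⟩).symm
    rw [Basis.unitsSMul_apply, basis_apply]
  · simp only [hsum, Projectivization.mk_rep]

end IsFrame

theorem stmt8_general (K F : Type*) [Field K] [Field F] [Algebra K F] (m : ℕ)
    (f : Fin (m + 2) → Projectivization F (Fin (m + 1) → F)) (hf : IsFrame F m f) :
    ∃! B : Set (Projectivization F (Fin (m + 1) → F)),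
      IsSubgeometry K F m m B ∧ ∀ i, f i ∈ B := by
  obtain ⟨b, hpts, _, hlast⟩ := hf.exists_basis_mk_eq
  refine ⟨(span K (range b)).projPoints F,
    ⟨⟨b, b.linearIndependent, rfl⟩, Fin.lastCases ?_ fun j => ?_⟩, ?_⟩
  · rintro _ ⟨⟨b', -, rfl⟩, hmem⟩
    have : FiniteDimensional K (span K (range b')) := .span_of_finite K (finite_range b')
    obtain ⟨a, ha⟩ := exists_eq_units_smul_span_of_smul_mem b.linearIndependent
      (finrank_range_le_card b') (fun j => mk_mem_projPoints_iff.1 (hpts j ▸ hmem j.castSucc))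
      (mk_mem_projPoints_iff.1 (hlast ▸ hmem (Fin.last _)))
    exact (congrArg (projPoints F) ha).trans (projPoints_units_smul a _)
  · exact hlast ▸ ⟨_, _, sum_mem fun j _ => subset_span (mem_range_self j), rfl⟩
  · exact hpts j ▸ ⟨_, _, subset_span (mem_range_self j), rfl⟩

/-- For each frame of `PG(m,q)` with `q = (q')^(ρ+1)`, there is a unique
`q'`-subgeometry of `PG(m,q)` containing each point of the frame. -/
theorem stmt8 (K F : Type*) [Field K] [Field F] [Algebra K F] [Fintype K] [Fintype F]
    (ρ m : ℕ) (hq : Fintype.card F = Fintype.card K ^ (ρ + 1))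
    (f : Fin (m + 2) → Projectivization F (Fin (m + 1) → F)) (hf : IsFrame F m f) :
    ∃! B : Set (Projectivization F (Fin (m + 1) → F)),
      IsSubgeometry K F m m B ∧ ∀ i, f i ∈ B :=
  stmt8_general K F m f hf
end

section
/- Let q = (q')^(ρ+1), let C be an (m-1)-dimensional q'-subgeometry of PG(m,q) spanning a hyperplane Σ, and let L be a q'-subline having exactly one point in common with C and spanning a line not contained in Σ. Then there exists a unique m-dimensional q'-subgeometry of PG(m,q) containing both C and L. -/
section Aux

open Submodule Set

variable {K F : Type*} [Field K] [Field F] [Algebra K F]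

/-- Scaling a family by a fixed scalar scales its `K`-span memberships. -/
lemma aux_smul_span {ι : Type*} [Fintype ι] {n : ℕ} (t : F) (l : ι → (Fin n → F))
    {x : Fin n → F} (hx : x ∈ span K (range l)) :
    t • x ∈ span K (range fun i => t • l i) := by
  obtain ⟨γ, rfl⟩ := (mem_span_range_iff_exists_fun K).mp hx
  rw [Finset.smul_sum]
  exact (mem_span_range_iff_exists_fun K).mpr
    ⟨γ, Finset.sum_congr rfl fun i _ => smul_comm (γ i) t (l i)⟩

lemma aux_algebraMap_inj : Function.Injective fun r : K => r • (1 : F) := by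
  have : (fun r : K => r • (1 : F)) = algebraMap K F := by
    funext r; rw [Algebra.smul_def, mul_one]
  rw [this]
  exact (algebraMap K F).injective

end Aux

/-- Let `q = (q')^(ρ+1)`, let `C` be an `(m-1)`-dimensional `q'`-subgeometry of `PG(m,q)`
spanning a hyperplane `Σ`, and let `L` be a `q'`-subline having exactly one point in common
with `C` and spanning a line not contained in `Σ`.  Then there exists a unique
`m`-dimensional `q'`-subgeometry of `PG(m,q)` containing both `C` and `L`. -/
theorem stmt9 (K F : Type*) [Field K] [Field F] [Algebra K F] [Fintype K] [Fintype F]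
    (ρ m : ℕ) (hm : 1 ≤ m) (hq : Fintype.card F = Fintype.card K ^ (ρ + 1))
    (C L : Set (Projectivization F (Fin (m + 1) → F)))
    (hC : IsSubgeometry K F m (m - 1) C) (hL : IsSubgeometry K F m 1 L)
    (hmeet : ∃! P, P ∈ C ∩ L)
    (hline : ¬ Submodule.span F (Projectivization.rep '' L) ≤
        Submodule.span F (Projectivization.rep '' C)) :
    ∃! B : Set (Projectivization F (Fin (m + 1) → F)),
      IsSubgeometry K F m m B ∧ C ⊆ B ∧ L ⊆ B := by
  classical
  open Submodule Set Projectivization in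
  obtain ⟨n, rfl⟩ : ∃ n, m = n + 1 := ⟨m - 1, (Nat.succ_pred_eq_of_pos hm).symm⟩
  simp only [Nat.add_sub_cancel] at hC
  obtain ⟨c, hc, hCeq⟩ := hC
  obtain ⟨l, hl, hLeq⟩ := hL
  -- membership lemmas for C and L
  have hcC : ∀ z (hz : z ≠ 0), z ∈ span K (range c) → Projectivization.mk F z hz ∈ C := by
    intro z hz hmem; rw [hCeq]; exact ⟨z, hz, hmem, rfl⟩
  have hlL : ∀ z (hz : z ≠ 0), z ∈ span K (range l) → Projectivization.mk F z hz ∈ L := by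
    intro z hz hmem; rw [hLeq]; exact ⟨z, hz, hmem, rfl⟩
  -- the intersection point
  obtain ⟨P₀, ⟨hP₀C, hP₀L⟩, -⟩ := hmeet
  rw [hCeq] at hP₀C
  rw [hLeq] at hP₀L
  obtain ⟨v, hv0, hvc, hPv⟩ := hP₀C
  obtain ⟨x, hx0, hxl, hPx⟩ := hP₀L
  have hmkvx : Projectivization.mk F v hv0 = Projectivization.mk F x hx0 := by
    rw [← hPv, ← hPx]
  obtain ⟨a, hax⟩ := (Projectivization.mk_eq_mk_iff F _ _ hv0 hx0).mp hmkvx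
  -- a • x = v
  set l' : Fin 2 → (Fin (n + 1 + 1) → F) := fun i => (a : F) • l i with hl'def
  obtain ⟨β, hβ⟩ := (mem_span_range_iff_exists_fun K).mp hxl
  have hvl' : v = β 0 • l' 0 + β 1 • l' 1 := by
    have hva : v = (a : F) • x := by rw [← hax, Units.smul_def]
    rw [hva, ← hβ, Fin.sum_univ_two, smul_add,
      smul_comm ((a : F)) (β 0) (l 0), smul_comm ((a : F)) (β 1) (l 1)]
  -- choose w completing v to a basis of L's K-structure
  have hwex : ∃ w : Fin (n + 1 + 1) → F,
      (∃ y, y ≠ 0 ∧ y ∈ span K (range l) ∧ w = (a : F) • y) ∧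
      ∀ i, l' i ∈ span K ({v, w} : Set (Fin (n + 1 + 1) → F)) := by
    by_cases hb0 : β 0 = 0
    · have hb1 : β 1 ≠ 0 := by
        intro hb1
        apply hv0
        rw [hvl', hb0, hb1, zero_smul, zero_smul, add_zero]
      refine ⟨l' 0, ⟨l 0, hl.ne_zero 0, subset_span ⟨0, rfl⟩, rfl⟩, ?_⟩
      have h0 : l' 0 ∈ span K ({v, l' 0} : Set (Fin (n + 1 + 1) → F)) :=
        subset_span (by simp)
      have h1 : l' 1 ∈ span K ({v, l' 0} : Set (Fin (n + 1 + 1) → F)) := by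
        refine (Submodule.mem_span_pair).mpr ⟨(β 1)⁻¹, 0, ?_⟩
        rw [zero_smul, add_zero, hvl', hb0, zero_smul, zero_add, smul_smul,
          inv_mul_cancel₀ hb1, one_smul]
      intro i
      fin_cases i
      exacts [h0, h1]
    · refine ⟨l' 1, ⟨l 1, hl.ne_zero 1, subset_span ⟨1, rfl⟩, rfl⟩, ?_⟩
      have h1 : l' 1 ∈ span K ({v, l' 1} : Set (Fin (n + 1 + 1) → F)) :=
        subset_span (by simp)
      have h0 : l' 0 ∈ span K ({v, l' 1} : Set (Fin (n + 1 + 1) → F)) := by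
        refine (Submodule.mem_span_pair).mpr ⟨(β 0)⁻¹, -((β 0)⁻¹ * β 1), ?_⟩
        have hkey : (β 0)⁻¹ • (v - β 1 • l' 1) = l' 0 := by
          rw [hvl', add_sub_cancel_right, smul_smul, inv_mul_cancel₀ hb0, one_smul]
        rw [← hkey, smul_sub, smul_smul, neg_smul, ← sub_eq_add_neg]
      intro i
      fin_cases i
      exacts [h0, h1]
  obtain ⟨w, ⟨y, hy0, hyl, hwy⟩, hl'vw⟩ := hwex
  -- v in the F-span of c
  have hvF : v ∈ span F (range c) := Submodule.span_subset_span K F _ hvc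
  -- w is not in the F-span of c
  have hwF : w ∉ span F (range c) := by
    intro hw
    apply hline
    have hl'F : ∀ i, l' i ∈ span F (range c) := by
      intro i
      have h1 : span K ({v, w} : Set (Fin (n + 1 + 1) → F)) ≤
          (span F (range c)).restrictScalars K := by
        rw [Submodule.span_le]
        rintro z (rfl | rfl)
        · exact hvF
        · exact hw
      exact h1 (hl'vw i)
    have hlF : ∀ i, l i ∈ span F (range c) := by
      intro i
      have : l i = (a : F)⁻¹ • l' i := by
        rw [hl'def]; simp [smul_smul]
      rw [this]
      exact Submodule.smul_mem _ _ (hl'F i)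
    have h2 : span F (Projectivization.rep '' L) ≤ span F (range c) := by
      rw [Submodule.span_le]
      rintro _ ⟨P, hPL, rfl⟩
      rw [hLeq] at hPL
      obtain ⟨z, hz0, hzl, rfl⟩ := hPL
      obtain ⟨u, hu⟩ := (Projectivization.mk_eq_mk_iff F _ _
        (Projectivization.rep_nonzero _) hz0).mp (Projectivization.mk_rep _)
      rw [← hu, Units.smul_def]
      have hzF : z ∈ span F (range c) := by
        have : span K (range l) ≤ (span F (range c)).restrictScalars K := by
          rw [Submodule.span_le]
          rintro _ ⟨i, rfl⟩
          exact hlF i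
        exact this hzl
      exact Submodule.smul_mem _ _ hzF
    have h3 : span F (range c) ≤ span F (Projectivization.rep '' C) := by
      rw [Submodule.span_le]
      rintro _ ⟨i, rfl⟩
      have hmem := hcC (c i) (hc.ne_zero i) (subset_span ⟨i, rfl⟩)
      obtain ⟨u, hu⟩ := (Projectivization.mk_eq_mk_iff F _ _
        (Projectivization.rep_nonzero _) (hc.ne_zero i)).mp
        (Projectivization.mk_rep (Projectivization.mk F (c i) (hc.ne_zero i)))
      have : c i = (u : F)⁻¹ • Projectivization.rep (Projectivization.mk F (c i) (hc.ne_zero i)) := by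
        rw [← hu, Units.smul_def, smul_smul, inv_mul_cancel₀ (Units.ne_zero u), one_smul]
      rw [this]
      exact Submodule.smul_mem _ _ (subset_span ⟨_, hmem, rfl⟩)
    exact h2.trans h3
  -- the big basis
  set b : Fin (n + 1 + 1) → (Fin (n + 1 + 1) → F) := Fin.snoc c w with hbdef
  have hb : LinearIndependent F b := linearIndependent_fin_snoc.mpr ⟨hc, hwF⟩
  have hrange_cb : range c ⊆ range b := by
    rintro _ ⟨i, rfl⟩
    exact ⟨i.castSucc, by simp [hbdef]⟩
  have hvb : v ∈ span K (range b) := Submodule.span_mono hrange_cb hvc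
  have hwb : w ∈ span K (range b) := subset_span ⟨Fin.last _, by simp [hbdef]⟩
  have hl'b : ∀ i, l' i ∈ span K (range b) := by
    intro i
    have h1 : span K ({v, w} : Set (Fin (n + 1 + 1) → F)) ≤ span K (range b) := by
      rw [Submodule.span_le]
      rintro z (rfl | rfl)
      · exact hvb
      · exact hwb
    exact h1 (hl'vw i)
  have hspanl'b : span K (range l') ≤ span K (range b) := by
    rw [Submodule.span_le]
    rintro _ ⟨i, rfl⟩
    exact hl'b i
  -- the candidate subgeometry
  set B₀ : Set (Projectivization F (Fin (n + 1 + 1) → F)) :=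
    {P | ∃ (z : Fin (n + 1 + 1) → F) (hz : z ≠ 0),
      z ∈ span K (range b) ∧ P = Projectivization.mk F z hz} with hB₀def
  have hCB₀ : C ⊆ B₀ := by
    intro P hP
    rw [hCeq] at hP
    obtain ⟨z, hz0, hzc, rfl⟩ := hP
    exact ⟨z, hz0, Submodule.span_mono hrange_cb hzc, rfl⟩
  have hLB₀ : L ⊆ B₀ := by
    intro P hP
    rw [hLeq] at hP
    obtain ⟨z, hz0, hzl, rfl⟩ := hP
    have haz : (a : F) • z ∈ span K (range b) := hspanl'b (aux_smul_span (a : F) l hzl)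
    have haz0 : (a : F) • z ≠ 0 := smul_ne_zero (Units.ne_zero a) hz0
    refine ⟨(a : F) • z, haz0, haz, ?_⟩
    exact ((Projectivization.mk_eq_mk_iff F _ _ haz0 hz0).mpr ⟨a, rfl⟩).symm
  -- some frame points
  have hw0 : w ≠ 0 := fun h => hwF (h ▸ Submodule.zero_mem _)
  have hvw0 : v + w ≠ 0 := by
    intro h
    apply hwF
    have : w = -v := by linear_combination (norm := module) h
    rw [this]
    exact Submodule.neg_mem _ hvF
  have hmkwL : Projectivization.mk F w hw0 ∈ L := by
    have := hlL y hy0 hyl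
    have heq : Projectivization.mk F w hw0 = Projectivization.mk F y hy0 :=
      (Projectivization.mk_eq_mk_iff F _ _ hw0 hy0).mpr ⟨a, hwy.symm⟩
    rwa [heq]
  have hxy0 : x + y ≠ 0 := by
    intro h
    apply hvw0
    rw [← hax, hwy, Units.smul_def, ← smul_add, h, smul_zero]
  have hmkvwL : Projectivization.mk F (v + w) hvw0 ∈ L := by
    have hmem := hlL (x + y) hxy0 (Submodule.add_mem _ hxl hyl)
    have heq : Projectivization.mk F (v + w) hvw0 = Projectivization.mk F (x + y) hxy0 := by
      refine (Projectivization.mk_eq_mk_iff F _ _ hvw0 hxy0).mpr ⟨a, ?_⟩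
      rw [smul_add, hax, hwy, Units.smul_def]
    rwa [heq]
  have hs0 : (∑ i, c i) ≠ 0 := by
    intro h
    have h1 : (∑ i, (1 : F) • c i) = 0 := by simpa using h
    simpa using Fintype.linearIndependent_iff.mp hc (fun _ => 1) h1 0
  have hmksC : Projectivization.mk F (∑ i, c i) hs0 ∈ C :=
    hcC _ hs0 (Submodule.sum_mem _ fun i _ => subset_span ⟨i, rfl⟩)
  -- existence and uniqueness
  refine ⟨B₀, ⟨⟨b, hb, rfl⟩, hCB₀, hLB₀⟩, ?_⟩
  rintro B' ⟨⟨b', hb', rfl⟩, hCB', hLB'⟩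
  -- b' is an F-basis; its K-span S' contains scalar multiples of all frame points
  have hmem' : ∀ z (hz : z ≠ 0),
      (Projectivization.mk F z hz ∈ {P | ∃ (u : Fin (n + 1 + 1) → F) (hu : u ≠ 0),
        u ∈ span K (range b') ∧ P = Projectivization.mk F u hu}) →
      ∃ t : F, t ≠ 0 ∧ t • z ∈ span K (range b') := by
    rintro z hz ⟨u, hu0, humem, heq⟩
    obtain ⟨s, hs⟩ := (Projectivization.mk_eq_mk_iff F _ _ hz hu0).mp heq
    refine ⟨(s : F)⁻¹, inv_ne_zero (Units.ne_zero s), ?_⟩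
    have : (s : F)⁻¹ • z = u := by
      rw [← hs, Units.smul_def, smul_smul, inv_mul_cancel₀ (Units.ne_zero s), one_smul]
    rwa [this]
  choose! μ hμ0 hμ using fun i =>
    hmem' (c i) (hc.ne_zero i) (hCB' (hcC (c i) (hc.ne_zero i) (subset_span ⟨i, rfl⟩)))
  obtain ⟨σ, hσ0, hσ⟩ := hmem' _ hs0 (hCB' hmksC)
  obtain ⟨ν, hν0, hν⟩ := hmem' w hw0 (hLB' hmkwL)
  obtain ⟨τ, hτ0, hτ⟩ := hmem' (v + w) hvw0 (hLB' hmkvwL)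
  -- the family b'' sits inside S' and is independent, hence spans S'
  set b'' : Fin (n + 1 + 1) → (Fin (n + 1 + 1) → F) :=
    Fin.snoc (fun i => μ i • c i) (ν • w) with hb''def
  have hb''U : b'' = (fun j => Fin.lastCases (Units.mk0 ν hν0)
      (fun i => Units.mk0 (μ i) (hμ0 i)) j : Fin (n + 1 + 1) → Fˣ) • b := by
    funext j
    refine Fin.lastCases ?_ (fun i => ?_) j
    · simp [hb''def, hbdef, Pi.smul_apply']
    · simp [hb''def, hbdef, Pi.smul_apply']
  have hb''F : LinearIndependent F b'' := by
    rw [hb''U]; exact hb.units_smul _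
  have hb''K : LinearIndependent K b'' := hb''F.restrict_scalars aux_algebraMap_inj
  have hb'K : LinearIndependent K b' := hb'.restrict_scalars aux_algebraMap_inj
  have hle : span K (range b'') ≤ span K (range b') := by
    rw [Submodule.span_le]
    rintro _ ⟨j, rfl⟩
    refine Fin.lastCases ?_ (fun i => ?_) j
    · rw [hb''def]; simpa [Fin.snoc_last] using hν
    · rw [hb''def]; simpa [Fin.snoc_castSucc] using hμ i
  have hSeq : span K (range b'') = span K (range b') := by
    refine Submodule.eq_of_le_of_finrank_le hle ?_
    rw [finrank_span_eq_card hb'K, finrank_span_eq_card hb''K]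
  -- coefficient extraction: σ-equation
  obtain ⟨g, hg⟩ := (mem_span_range_iff_exists_fun K).mp (hSeq ▸ hσ)
  have hg' : ∀ i, algebraMap K F (g i.castSucc) * μ i = σ := by
    have hsum : (∑ j, (Fin.lastCases (algebraMap K F (g (Fin.last _)) * ν)
        (fun i => algebraMap K F (g i.castSucc) * μ i - σ) j : F) • b j) = 0 := by
      rw [Fin.sum_univ_castSucc]
      simp only [Fin.lastCases_castSucc, Fin.lastCases_last]
      have h1 : (∑ j, g j • b'' j) = σ • ∑ i, c i := hg
      rw [Fin.sum_univ_castSucc] at h1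
      simp only [hb''def, Fin.snoc_castSucc, Fin.snoc_last] at h1
      have h2 : ∀ (k : K) (z : Fin (n + 1 + 1) → F) (t : F),
          k • (t • z) = (algebraMap K F k * t) • z := by
        intro k z t
        rw [← algebraMap_smul F k (t • z), smul_smul]
      simp only [h2] at h1
      rw [Finset.smul_sum] at h1
      simp only [hbdef, Fin.snoc_castSucc, Fin.snoc_last, sub_smul]
      rw [Finset.sum_sub_distrib, sub_add_eq_add_sub, h1, sub_self]
    intro i
    have := Fintype.linearIndependent_iff.mp hb _ hsum i.castSucc
    simp only [Fin.lastCases_castSucc] at this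
    exact sub_eq_zero.mp this
  -- coefficient extraction: τ-equation
  obtain ⟨aco, haco⟩ := (mem_span_range_iff_exists_fun K).mp hvc
  obtain ⟨h, hh⟩ := (mem_span_range_iff_exists_fun K).mp (hSeq ▸ hτ)
  have hh' : (∀ i, algebraMap K F (h i.castSucc) * μ i = τ * algebraMap K F (aco i)) ∧
      algebraMap K F (h (Fin.last _)) * ν = τ := by
    have hsum : (∑ j, (Fin.lastCases (algebraMap K F (h (Fin.last _)) * ν - τ)
        (fun i => algebraMap K F (h i.castSucc) * μ i - τ * algebraMap K F (aco i)) j : F)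
        • b j) = 0 := by
      rw [Fin.sum_univ_castSucc]
      simp only [Fin.lastCases_castSucc, Fin.lastCases_last]
      have h1 : (∑ j, h j • b'' j) = τ • (v + w) := hh
      rw [Fin.sum_univ_castSucc] at h1
      simp only [hb''def, Fin.snoc_castSucc, Fin.snoc_last] at h1
      have h2 : ∀ (k : K) (z : Fin (n + 1 + 1) → F) (t : F),
          k • (t • z) = (algebraMap K F k * t) • z := by
        intro k z t
        rw [← algebraMap_smul F k (t • z), smul_smul]
      simp only [h2] at h1
      have h3 : τ • (v + w) = (∑ i, (τ * algebraMap K F (aco i)) • c i) + τ • w := by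
        rw [smul_add, ← haco, Finset.smul_sum]
        congr 1
        refine Finset.sum_congr rfl fun i _ => ?_
        rw [← algebraMap_smul F (aco i) (c i), smul_smul]
      rw [h3] at h1
      simp only [hbdef, Fin.snoc_castSucc, Fin.snoc_last, sub_smul]
      rw [Finset.sum_sub_distrib, sub_add_sub_comm, h1, sub_self]
    have key := Fintype.linearIndependent_iff.mp hb _ hsum
    constructor
    · intro i
      have := key i.castSucc
      simp only [Fin.lastCases_castSucc] at this
      exact sub_eq_zero.mp this
    · have := key (Fin.last _)
      simp only [Fin.lastCases_last] at this
      exact sub_eq_zero.mp this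
  -- a nonzero coordinate of v
  have hex : ∃ i₀, aco i₀ ≠ 0 := by
    by_contra hno
    push_neg at hno
    apply hv0
    rw [← haco]
    simp [hno]
  obtain ⟨i₀, hi₀⟩ := hex
  -- extract K-units relating b'' and b
  have hgF : ∀ i : Fin (n + 1), algebraMap K F (g i.castSucc) ≠ 0 := by
    intro i hz
    apply hσ0
    rw [← hg' i, hz, zero_mul]
  have hgne : ∀ i : Fin (n + 1), g i.castSucc ≠ 0 := by
    intro i hz
    exact hgF i (by rw [hz, map_zero])
  have hμval : ∀ i, μ i = algebraMap K F ((g i.castSucc)⁻¹) * σ := by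
    intro i
    rw [map_inv₀]
    exact (eq_inv_mul_iff_mul_eq₀ (hgF i)).mpr (hg' i)
  have hacoF : algebraMap K F (aco i₀) ≠ 0 := by
    intro hz
    exact hi₀ ((algebraMap K F).injective (by rw [hz, map_zero]))
  have hlastF : algebraMap K F (h (Fin.last (n + 1))) ≠ 0 := by
    intro hz
    apply hτ0
    rw [← hh'.2, hz, zero_mul]
  set e : K := (h (Fin.last (n + 1)))⁻¹ * (h i₀.castSucc * (g i₀.castSucc)⁻¹ * (aco i₀)⁻¹)
    with hedef
  have hνval : ν = algebraMap K F e * σ := by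
    have h4 := hh'.1 i₀
    rw [hμval i₀] at h4
    have h5 := hh'.2
    have i1 : algebraMap K F (h (Fin.last (n + 1))) *
        (algebraMap K F (h (Fin.last (n + 1))))⁻¹ = 1 := mul_inv_cancel₀ hlastF
    have i2 : algebraMap K F (aco i₀) * (algebraMap K F (aco i₀))⁻¹ = 1 :=
      mul_inv_cancel₀ hacoF
    rw [hedef, map_mul, map_inv₀, map_mul, map_mul, map_inv₀ (algebraMap K F) (aco i₀)]
    linear_combination (-ν) * i1 + (algebraMap K F (h (Fin.last (n + 1))))⁻¹ * h5 +
      (-((algebraMap K F (h (Fin.last (n + 1))))⁻¹ * τ)) * i2 +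
      (-((algebraMap K F (h (Fin.last (n + 1))))⁻¹ * (algebraMap K F (aco i₀))⁻¹)) * h4
  have he0 : e ≠ 0 := by
    intro hz
    apply hν0
    rw [hνval, hz, map_zero, zero_mul]
  set U : Fin (n + 1 + 1) → K :=
    fun j => Fin.lastCases e (fun i => (g i.castSucc)⁻¹) j with hUdef
  have hU0 : ∀ j, U j ≠ 0 := by
    intro j
    refine Fin.lastCases ?_ (fun i => ?_) j
    · simpa [hUdef] using he0
    · simpa [hUdef] using inv_ne_zero (hgne i)
  have hbU : ∀ j, b'' j = σ • (U j • b j) := by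
    intro j
    refine Fin.lastCases ?_ (fun i => ?_) j
    · simp only [hb''def, hUdef, hbdef, Fin.snoc_last, Fin.lastCases_last]
      rw [← algebraMap_smul F e w, smul_smul, hνval, mul_comm σ (algebraMap K F e)]
    · simp only [hb''def, hUdef, hbdef, Fin.snoc_castSucc, Fin.lastCases_castSucc]
      rw [← algebraMap_smul F (g i.castSucc)⁻¹ (c i), smul_smul, hμval i,
        mul_comm σ (algebraMap K F ((g i.castSucc)⁻¹))]
  -- the final set equality
  ext P
  constructor
  · rintro ⟨z, hz0, hzmem, rfl⟩
    rw [← hSeq] at hzmem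
    obtain ⟨γ, hγ⟩ := (mem_span_range_iff_exists_fun K).mp hzmem
    have hz' : z = σ • ∑ j, (γ j * U j) • b j := by
      rw [← hγ, Finset.smul_sum]
      refine Finset.sum_congr rfl fun j _ => ?_
      rw [hbU j, smul_comm (γ j) σ, ← mul_smul]
    have hz'0 : (∑ j, (γ j * U j) • b j) ≠ 0 := by
      intro hzz
      apply hz0
      rw [hz', hzz, smul_zero]
    refine ⟨∑ j, (γ j * U j) • b j, hz'0,
      (mem_span_range_iff_exists_fun K).mpr ⟨_, rfl⟩, ?_⟩
    refine (Projectivization.mk_eq_mk_iff F _ _ hz0 hz'0).mpr ⟨Units.mk0 σ hσ0, ?_⟩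
    rw [Units.smul_def]
    exact hz'.symm
  · rintro ⟨z, hz0, hzmem, rfl⟩
    obtain ⟨γ, hγ⟩ := (mem_span_range_iff_exists_fun K).mp hzmem
    have hz' : σ • z = ∑ j, (γ j * (U j)⁻¹) • b'' j := by
      rw [← hγ, Finset.smul_sum]
      refine Finset.sum_congr rfl fun j _ => ?_
      rw [hbU j, mul_smul, smul_comm ((U j)⁻¹) σ (U j • b j), ← mul_smul (U j)⁻¹ (U j),
        inv_mul_cancel₀ (hU0 j), one_smul, smul_comm (γ j) σ (b j)]
    have hσz0 : σ • z ≠ 0 := smul_ne_zero hσ0 hz0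
    have hmemz : σ • z ∈ Submodule.span K (Set.range b') := by
      rw [← hSeq]
      exact (mem_span_range_iff_exists_fun K).mpr ⟨_, hz'.symm⟩
    refine ⟨σ • z, hσz0, hmemz, ?_⟩
    refine (Projectivization.mk_eq_mk_iff F _ _ hz0 hσz0).mpr ⟨(Units.mk0 σ hσ0)⁻¹, ?_⟩
    rw [Units.smul_def]
    simp [smul_smul, inv_mul_cancel₀ hσ0]
end

section
/- Let q = (q')^(ρ+1) and fix coordinates on PG(m,q). Let C be the (m-1)-dimensional q'-subgeometry in the hyperplane X₀ = 0 determined by the frame points E₁,…,E_m and E' = (0,1,…,1). Let P = (1,x₁,…,x_m) and Q = (1,y₁,…,y_m) be distinct points not in the hyperplane X₀ = 0 such that the line PQ meets the hyperplane in E'. Then the set of points of the unique m-dimensional q'-subgeometry B containing C, P, Q that lie outside the hyperplane is exactly { (1, x₁+k₁(y₁-x₁), x₂+k₂(y₁-x₁), …, x_m+k_m(y₁-x₁)) : k₁,…,k_m ∈ F_{q'} }. -/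
/-- Coordinate description of (the affine part of) the unique `m`-dimensional
`q'`-subgeometry `B` of `PG(m,q)`, `q = (q')^(ρ+1)`, containing the canonical
`(m-1)`-dimensional `q'`-subgeometry `C` in the hyperplane `X₀ = 0` and two affine
points `P = (1,x₁,…,x_m)`, `Q = (1,y₁,…,y_m)` whose joining line meets the hyperplane
in `E' = (0,1,…,1)`:  the points of `B` outside the hyperplane are exactly the points
`(1, x₁+k₁(y₁-x₁), …, x_m+k_m(y₁-x₁))` with `k₁,…,k_m ∈ F_{q'}`. -/
theorem stmt10 (K F : Type*) [Field K] [Field F] [Algebra K F] [Fintype K] [Fintype F]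
    (ρ m : ℕ) (hm : 0 < m) (hq : Fintype.card F = Fintype.card K ^ (ρ + 1))
    (x y : Fin m → F) (hxy : x ≠ y)
    (hdiff : ∀ i j : Fin m, y i - x i = y j - x j)
    (B : Set (Projectivization F (Fin (m + 1) → F)))
    (hB : IsSubgeometry K F m m B)
    (hCB : {P | ∃ (v : Fin (m + 1) → F) (hv : v ≠ 0),
        v ∈ Submodule.span K
          (Set.range fun i : Fin m => (Pi.single i.succ (1 : F) : Fin (m + 1) → F)) ∧
        P = Projectivization.mk F v hv} ⊆ B)
    (hPB : Projectivization.mk F (Fin.cons 1 x)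
        (by intro h; simpa using congrFun h 0) ∈ B)
    (hQB : Projectivization.mk F (Fin.cons 1 y)
        (by intro h; simpa using congrFun h 0) ∈ B) :
    {R | R ∈ B ∧ R.rep 0 ≠ 0} =
      {R | ∃ k : Fin m → K, R = Projectivization.mk F
        (Fin.cons 1 fun i =>
          x i + algebraMap K F (k i) * (y ⟨0, hm⟩ - x ⟨0, hm⟩))
        (by intro h; simpa using congrFun h 0)} := by
  classical
  obtain ⟨b, hb, hBeq⟩ := hB
  set S := Submodule.span K (Set.range b) with hSdef
  set δ : F := y ⟨0, hm⟩ - x ⟨0, hm⟩ with hδdef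
  have hδ : δ ≠ 0 := by
    intro h
    apply hxy
    funext i
    have h2 := hdiff i ⟨0, hm⟩
    rw [← hδdef, h] at h2
    linear_combination -h2
  have hinj : Function.Injective (algebraMap K F) := (algebraMap K F).injective
  have hmapne : ∀ a : K, a ≠ 0 → algebraMap K F a ≠ 0 := by
    intro a ha; simpa using ha
  -- scaled copies of P, Q, and the E_i in S
  have hP' : ∃ c : F, c ≠ 0 ∧ c • (Fin.cons 1 x : Fin (m+1) → F) ∈ S := by
    rw [hBeq] at hPB
    obtain ⟨v, hv0, hvS, hveq⟩ := hPB
    rw [Projectivization.mk_eq_mk_iff] at hveq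
    obtain ⟨t, ht⟩ := hveq
    refine ⟨(t : F)⁻¹, by simp, ?_⟩
    have : (t : F)⁻¹ • (Fin.cons 1 x : Fin (m+1) → F) = v := by
      rw [← ht]; rw [Units.smul_def, smul_smul]; simp
    rw [this]; exact hvS
  have hQ' : ∃ d : F, d ≠ 0 ∧ d • (Fin.cons 1 y : Fin (m+1) → F) ∈ S := by
    rw [hBeq] at hQB
    obtain ⟨v, hv0, hvS, hveq⟩ := hQB
    rw [Projectivization.mk_eq_mk_iff] at hveq
    obtain ⟨t, ht⟩ := hveq
    refine ⟨(t : F)⁻¹, by simp, ?_⟩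
    have : (t : F)⁻¹ • (Fin.cons 1 y : Fin (m+1) → F) = v := by
      rw [← ht]; rw [Units.smul_def, smul_smul]; simp
    rw [this]; exact hvS
  obtain ⟨c, hc0, hcS⟩ := hP'
  obtain ⟨d, hd0, hdS⟩ := hQ'
  have hE' : ∀ i : Fin m, ∃ l : F, l ≠ 0 ∧
      l • (Pi.single i.succ (1:F) : Fin (m+1) → F) ∈ S := by
    intro i
    have hne : (Pi.single i.succ (1:F) : Fin (m+1) → F) ≠ 0 := by
      intro h
      have := congrFun h i.succ
      simp at this
    have hmem : Projectivization.mk F (Pi.single i.succ (1:F)) hne ∈ B := by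
      apply hCB
      exact ⟨Pi.single i.succ (1:F), hne,
        Submodule.subset_span ⟨i, rfl⟩, rfl⟩
    rw [hBeq] at hmem
    obtain ⟨v, hv0, hvS, hveq⟩ := hmem
    rw [Projectivization.mk_eq_mk_iff] at hveq
    obtain ⟨t, ht⟩ := hveq
    refine ⟨(t : F)⁻¹, by simp, ?_⟩
    have : (t : F)⁻¹ • (Pi.single i.succ (1:F) : Fin (m+1) → F) = v := by
      rw [← ht]; rw [Units.smul_def, smul_smul]; simp
    rw [this]; exact hvS
  choose l hl0 hlS using hE'
  -- the K-basis of S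
  set u : Fin (m + 1) → (Fin (m + 1) → F) :=
    Fin.cons (c • (Fin.cons 1 x : Fin (m+1) → F))
      (fun i => l i • (Pi.single i.succ (1:F) : Fin (m+1) → F)) with hudef
  have huS : ∀ j, u j ∈ S := by
    intro j
    refine Fin.cases ?_ ?_ j
    · simpa [hudef] using hcS
    · intro i; simpa [hudef] using hlS i
  -- coordinates of K-linear combinations of u
  have hcoord0 : ∀ g : Fin (m+1) → K,
      (∑ j, g j • u j) 0 = algebraMap K F (g 0) * c := by
    intro g
    rw [Finset.sum_apply]
    rw [Fin.sum_univ_succ]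
    simp [hudef, Algebra.smul_def, Fin.succ_ne_zero]
  have hcoords : ∀ (g : Fin (m+1) → K) (i : Fin m),
      (∑ j, g j • u j) i.succ =
        algebraMap K F (g 0) * (c * x i) + algebraMap K F (g i.succ) * l i := by
    intro g i
    rw [Finset.sum_apply]
    rw [Fin.sum_univ_succ]
    have : ∀ j : Fin m, (g j.succ • u j.succ) i.succ =
        if j = i then algebraMap K F (g i.succ) * l i else 0 := by
      intro j
      by_cases h : j = i
      · subst h; simp [hudef, Algebra.smul_def, Pi.single_apply]
      · rw [if_neg h]
        have hne : i.succ ≠ j.succ :=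
          fun hh => h (Fin.succ_injective m hh).symm
        simp [hudef, Algebra.smul_def, Pi.single_apply, hne]
    rw [Finset.sum_congr rfl (fun j _ => this j), Finset.sum_ite_eq' Finset.univ i
      (fun _ => algebraMap K F (g i.succ) * l i)]
    simp [hudef, Algebra.smul_def, mul_assoc]
  have hu_li : LinearIndependent K u := by
    rw [Fintype.linearIndependent_iff]
    intro g hg
    have h0 : algebraMap K F (g 0) * c = 0 := by rw [← hcoord0 g, hg]; rfl
    have hg0 : g 0 = 0 := by
      rcases mul_eq_zero.1 h0 with h | h
      · exact hinj (by simpa using h)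
      · exact absurd h hc0
    intro j
    refine Fin.cases ?_ ?_ j
    · exact hg0
    · intro i
      have hi : algebraMap K F (g 0) * (c * x i) + algebraMap K F (g i.succ) * l i = 0 := by
        rw [← hcoords g i, hg]; rfl
      rw [hg0] at hi
      simp at hi
      rcases hi with h | h
      · exact hinj (by simpa using h)
      · exact absurd h (hl0 i)
  -- S is spanned by u over K
  have hspan : ∀ s ∈ S, ∃ g : Fin (m+1) → K, s = ∑ j, g j • u j := by
    have hbK : LinearIndependent K b :=
      hb.restrict_scalars (by simpa [Algebra.smul_def] using hinj)
    have hfin : Module.finrank K S = m + 1 := by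
      rw [hSdef, finrank_span_eq_card hbK, Fintype.card_fin]
    set u' : Fin (m+1) → S := fun j => ⟨u j, huS j⟩ with hu'def
    have hu'li : LinearIndependent K u' :=
      LinearIndependent.of_comp S.subtype (by exact hu_li)
    let bS := basisOfLinearIndependentOfCardEqFinrank hu'li (by simp [hfin])
    have hbS : ⇑bS = u' := coe_basisOfLinearIndependentOfCardEqFinrank hu'li _
    intro s hs
    have hmem : (⟨s, hs⟩ : S) ∈ Submodule.span K (Set.range u') := by
      rw [← hbS, Module.Basis.span_eq bS]; trivial
    rw [Submodule.mem_span_range_iff_exists_fun] at hmem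
    obtain ⟨g, hg⟩ := hmem
    refine ⟨g, ?_⟩
    have := congrArg Subtype.val hg
    simpa using this.symm
  -- expand Q in terms of u
  obtain ⟨a, ha⟩ := hspan _ hdS
  have ha0 : d = algebraMap K F (a 0) * c := by
    have := congrFun ha 0
    rw [hcoord0 a] at this
    simpa [Algebra.smul_def] using this
  have ha0ne : a 0 ≠ 0 := by
    intro h; rw [h] at ha0; simp at ha0; exact hd0 ha0
  have hli : ∀ i : Fin m,
      algebraMap K F (a i.succ) * l i = algebraMap K F (a 0) * c * δ := by
    intro i
    have h1 := congrFun ha i.succ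
    rw [hcoords a i] at h1
    have h2 : d * y i = algebraMap K F (a 0) * (c * x i)
        + algebraMap K F (a i.succ) * l i := by
      simpa [Algebra.smul_def] using h1
    have h3 : y i - x i = δ := hdiff i ⟨0, hm⟩
    rw [ha0] at h2
    rw [← h3]
    linear_combination -h2
  have hane : ∀ i : Fin m, a i.succ ≠ 0 := by
    intro i h
    have h2 := hli i
    rw [h, map_zero, zero_mul] at h2
    exact mul_ne_zero (mul_ne_zero (hmapne _ ha0ne) hc0) hδ h2.symm
  have hlval : ∀ i : Fin m, l i =
      algebraMap K F (a 0) * c * δ / algebraMap K F (a i.succ) := by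
    intro i
    rw [eq_div_iff (hmapne _ (hane i))]
    linear_combination hli i
  ext R
  simp only [Set.mem_setOf_eq]
  constructor
  · rintro ⟨hRB, hR0⟩
    rw [hBeq] at hRB
    obtain ⟨v, hv0, hvS, hveq⟩ := hRB
    obtain ⟨g, hg⟩ := hspan v hvS
    have hv00 : v 0 ≠ 0 := by
      have hrep := R.mk_rep
      rw [hveq, Projectivization.mk_eq_mk_iff] at hrep
      obtain ⟨t, ht⟩ := hrep
      intro h
      have h2 := congrFun ht 0
      simp only [Units.smul_def, Pi.smul_apply, smul_eq_mul] at h2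
      rw [h, mul_zero] at h2
      exact hR0 (by rw [hveq]; exact h2.symm)
    have hg0 : g 0 ≠ 0 := by
      intro h
      apply hv00
      rw [hg, hcoord0, h, map_zero, zero_mul]
    refine ⟨fun i => a 0 * g i.succ / (g 0 * a i.succ), ?_⟩
    rw [hveq, Projectivization.mk_eq_mk_iff]
    refine ⟨Units.mk0 (algebraMap K F (g 0) * c) (mul_ne_zero (hmapne _ hg0) hc0), ?_⟩
    have key : ∀ i : Fin m, algebraMap K F (g i.succ) * l i =
        algebraMap K F (g 0) * c *
          (algebraMap K F (a 0 * g i.succ / (g 0 * a i.succ)) * δ) := by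
      intro i
      rw [map_div₀, map_mul, map_mul, hlval i]
      have h1 : algebraMap K F (g 0) ≠ 0 := hmapne _ hg0
      have h2 : algebraMap K F (a i.succ) ≠ 0 := hmapne _ (hane i)
      field_simp
    funext t
    refine Fin.cases ?_ ?_ t
    · rw [hg, hcoord0]
      simp [Units.smul_def]
    · intro i
      rw [hg, hcoords]
      simp only [Units.smul_def, Units.val_mk0, Pi.smul_apply, Fin.cons_succ,
        smul_eq_mul]
      linear_combination -(key i)
  · rintro ⟨k, hk⟩
    have hfne : (Fin.cons 1 (fun i => x i + algebraMap K F (k i) * δ) :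
        Fin (m+1) → F) ≠ 0 := by
      intro h; simpa using congrFun h 0
    set w : Fin (m+1) → F :=
      c • (Fin.cons 1 (fun i => x i + algebraMap K F (k i) * δ) :
        Fin (m+1) → F) with hw
    have hw0 : w ≠ 0 := by
      intro h
      have := congrFun h 0
      simp [hw, hc0] at this
    have hweq : w = ∑ j, (Fin.cons 1 (fun i => k i * a i.succ / a 0) :
        Fin (m+1) → K) j • u j := by
      funext t
      refine Fin.cases ?_ ?_ t
      · rw [hcoord0]
        simp [hw]
      · intro i
        rw [hcoords]
        simp only [Fin.cons_zero, Fin.cons_succ, map_one, one_mul, hw,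
          Pi.smul_apply, smul_eq_mul]
        rw [map_div₀, map_mul, hlval i]
        have h1 : algebraMap K F (a 0) ≠ 0 := hmapne _ ha0ne
        have h2 : algebraMap K F (a i.succ) ≠ 0 := hmapne _ (hane i)
        field_simp
    have hwS : w ∈ S := by
      rw [hweq]
      exact Submodule.sum_mem _ (fun j _ => Submodule.smul_mem _ _ (huS j))
    constructor
    · rw [hBeq]
      refine ⟨w, hw0, hwS, ?_⟩
      rw [hk, Projectivization.mk_eq_mk_iff]
      refine ⟨(Units.mk0 c hc0)⁻¹, ?_⟩
      rw [hw, Units.smul_def, smul_smul]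
      simp [inv_mul_cancel₀ hc0]
    · rw [hk]
      intro h
      have hrep := (Projectivization.mk F
        ((Fin.cons 1 (fun i => x i + algebraMap K F (k i) * δ)) :
          Fin (m+1) → F) hfne).mk_rep
      rw [Projectivization.mk_eq_mk_iff] at hrep
      obtain ⟨t, ht⟩ := hrep
      have h2 := congrFun ht 0
      simp only [Units.smul_def, Pi.smul_apply, smul_eq_mul, Fin.cons_zero,
        mul_one] at h2
      rw [h] at h2
      exact t.ne_zero h2
end

section
/- Let q = (q')^(ρ+1) with ρ ≥ 0. Any m-dimensional q'-subgeometry of PG(m,q) is a ρ-saturating set of PG(m,q): every point of PG(m,q) lies in a subspace of dimension at most ρ spanned by points of the subgeometry. -/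
/-!
Fix a `K`-basis `e₀, …, e_ρ` of `F` and let `b₀, …, b_m` be an `F`-basis of `F^{m+1}` spanning
the subgeometry over `K`. Expanding every coordinate of a vector `v = ∑ cᵢ bᵢ` in the basis `e`
gives `v = ∑ⱼ eⱼ • wⱼ` with `wⱼ = ∑ᵢ (e.repr cᵢ)ⱼ • bᵢ` in the `K`-span of the `bᵢ`, so the point
`⟨v⟩` lies in the span of the at most `ρ + 1` subgeometry points `⟨wⱼ⟩`.
-/

open Submodule

open scoped LinearAlgebra.Projectivization

theorem Module.finrank_eq_of_card_eq_pow {K V : Type*} [DivisionRing K] [AddCommGroup V]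
    [Module K V] [Fintype K] [Fintype V] {n : ℕ} (h : Fintype.card V = Fintype.card K ^ n) :
    Module.finrank K V = n :=
  Nat.pow_right_injective Fintype.one_lt_card (Module.card_eq_pow_finrank.symm.trans h)

theorem exists_sum_smul_eq_of_mem_span {K F V ι : Type*} [CommSemiring K] [Semiring F]
    [Algebra K F] [AddCommMonoid V] [Module F V] [Module K V] [IsScalarTower K F V]
    [Fintype ι] {e : ι → F} (he : span K (Set.range e) = ⊤) {s : Set V} {v : V}
    (hv : v ∈ span F s) :
    ∃ w : ι → V, (∀ j, w j ∈ span K s) ∧ ∑ j, e j • w j = v := by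
  classical
  rw [← restrictScalars_mem K, ← span_smul_of_span_eq_top he] at hv
  induction hv using span_induction with
  | mem x hx =>
    obtain ⟨_, ⟨j, rfl⟩, y, hy, rfl⟩ := hx
    refine ⟨Pi.single j y, fun k => ?_, ?_⟩
    · rcases eq_or_ne k j with rfl | hk
      · simpa using subset_span hy
      · simp [hk]
    · rw [Fintype.sum_eq_single j fun k hk => by simp [hk]]
      simp
  | zero => exact ⟨0, fun _ => zero_mem _, by simp⟩
  | add x y _ _ hx hy =>
    obtain ⟨w, hw, rfl⟩ := hx
    obtain ⟨w', hw', rfl⟩ := hy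
    exact ⟨w + w', fun j => add_mem (hw j) (hw' j), by simp [smul_add, Finset.sum_add_distrib]⟩
  | smul c x _ hx =>
    obtain ⟨w, hw, rfl⟩ := hx
    exact ⟨c • w, fun j => smul_mem _ c (hw j), by simp [Finset.smul_sum, smul_comm c]⟩

namespace Projectivization

variable {K V : Type*} [DivisionRing K] [AddCommGroup V] [Module K V]

theorem mem_span_singleton_rep_mk (v : V) (hv : v ≠ 0) : v ∈ K ∙ (mk K v hv).rep := by
  rw [← submodule_eq, submodule_mk]
  exact mem_span_singleton_self v

theorem exists_finset_span_range_le {ι : Type*} [Fintype ι] (w : ι → V) :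
    ∃ T : Finset (ℙ K V), T.card ≤ Fintype.card ι ∧
      (∀ Q ∈ T, ∃ j, ∃ hj : w j ≠ 0, Q = mk K (w j) hj) ∧
      span K (Set.range w) ≤ span K (Projectivization.rep '' (T : Set (ℙ K V))) := by
  classical
  let T := Finset.univ.image fun j : {j // w j ≠ 0} => mk K (w j) j.2
  refine ⟨T, Finset.card_image_le.trans (Fintype.card_subtype_le _), fun Q hQ => ?_, ?_⟩
  · obtain ⟨j, -, rfl⟩ := Finset.mem_image.1 hQ
    exact ⟨j, j.2, rfl⟩
  · refine span_le.2 ?_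
    rintro _ ⟨j, rfl⟩
    by_cases hj : w j = 0
    · simp [hj]
    · have hjT : mk K (w j) hj ∈ T := Finset.mem_image.2 ⟨⟨j, hj⟩, Finset.mem_univ _, rfl⟩
      refine span_mono (Set.singleton_subset_iff.2 ?_) (mem_span_singleton_rep_mk (w j) hj)
      exact Set.mem_image_of_mem _ hjT

end Projectivization

/-- Let `q = (q')^(ρ+1)`.  Any `m`-dimensional `q'`-subgeometry of `PG(m,q)` is a
`ρ`-saturating set: every point lies in a subspace of dimension at most `ρ` spanned by
points of the subgeometry. -/
theorem stmt13 (K F : Type*) [Field K] [Field F] [Algebra K F] [Fintype K] [Fintype F]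
    (ρ m : ℕ) (hq : Fintype.card F = Fintype.card K ^ (ρ + 1))
    (B : Set (Projectivization F (Fin (m + 1) → F))) (hB : IsSubgeometry K F m m B) :
    ∀ P : Projectivization F (Fin (m + 1) → F),
      ∃ T : Finset (Projectivization F (Fin (m + 1) → F)),
        ↑T ⊆ B ∧ T.card ≤ ρ + 1 ∧
        P.rep ∈ Submodule.span F
          (Projectivization.rep '' (↑T : Set (Projectivization F (Fin (m + 1) → F)))) := by
  intro P
  obtain ⟨b, hb, rfl⟩ := hB
  let e := Module.finBasisOfFinrankEq K F (Module.finrank_eq_of_card_eq_pow hq)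
  have hbspan : span F (Set.range b) = ⊤ := hb.span_eq_top_of_card_eq_finrank (by simp)
  obtain ⟨w, hwK, hw⟩ :=
    exists_sum_smul_eq_of_mem_span e.span_eq (hbspan ▸ mem_top : P.rep ∈ span F (Set.range b))
  obtain ⟨T, hTcard, hTw, hTspan⟩ := Projectivization.exists_finset_span_range_le (K := F) w
  refine ⟨T, ?_, hTcard.trans (Fintype.card_fin _).le, ?_⟩
  · intro Q hQ
    obtain ⟨j, hj, rfl⟩ := hTw Q hQ
    exact ⟨w j, hj, hwK j, rfl⟩
  · rw [← hw]
    exact sum_mem fun j _ => smul_mem _ _ (hTspan (subset_span ⟨j, rfl⟩))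
end

section
/- Define, for integers n > ρ ≥ 1 with λ = min{ρ, n-ρ}, the quantity a(n,ρ,j) = (λ(2ρ-λ+2j+1) - j(3j+1))/2. Then for all j with 1 ≤ j ≤ λ-1, one has a(n,ρ,j) ≤ ρ(2ρ+1)/3. -/
/-- For `n > ρ ≥ 1`, `λ = min{ρ, n-ρ}` and `1 ≤ j ≤ λ-1`:
`a(n,ρ,j) = (λ(2ρ-λ+2j+1) - j(3j+1))/2 ≤ ρ(2ρ+1)/3`. -/
theorem stmt14 (n ρ l : ℕ) (hρ : 1 ≤ ρ) (hn : ρ < n) (hl : l = min ρ (n - ρ)) :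
    ∀ j : ℕ, 1 ≤ j → j ≤ l - 1 →
      ((l : ℚ) * (2 * (ρ : ℚ) - (l : ℚ) + 2 * (j : ℚ) + 1)
          - (j : ℚ) * (3 * (j : ℚ) + 1)) / 2
        ≤ (ρ : ℚ) * (2 * (ρ : ℚ) + 1) / 3 := by
  intro j hj1 hj2
  have hlρ : l ≤ ρ := by omega
  have hjl : j + 1 ≤ l := by omega
  have hL : (l : ℚ) ≤ (ρ : ℚ) := by exact_mod_cast hlρ
  have hJ : (j : ℚ) + 1 ≤ (l : ℚ) := by exact_mod_cast hjl
  have key : (0:ℚ) ≤ ((ρ:ℚ) - 3*j) * ((ρ:ℚ) - 3*j - 1) := by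
    rcases le_or_gt ρ (3*j) with h | h
    · have : (ρ:ℚ) ≤ 3*j := by exact_mod_cast h
      nlinarith
    · have : (3*j:ℕ) + 1 ≤ ρ := h
      have : (3:ℚ)*j + 1 ≤ ρ := by exact_mod_cast this
      nlinarith
  nlinarith [sq_nonneg ((ρ:ℚ) - l), mul_nonneg (by linarith : (0:ℚ) ≤ (ρ:ℚ) - l)
    (by positivity : (0:ℚ) ≤ 2*(j:ℚ)+1), key]
end

section
/- Let ρ ≥ 1, let n+1 be a multiple of ρ+1, and let q = (q')^(ρ+1) with q' a prime power. Then the bound B(n,ρ) of the subgeometry construction satisfies B(n,ρ) ≥ (ρ+1)(q^k + q^(k-1) + ⋯ + q) + (ρ+1) where k = (n−ρ)/(ρ+1); in particular the trivial bound s_q(n,ρ) ≤ (ρ+1)θ_k is not improved, using that (1/2)ρ(ρ+1)((q')^(n−ρ) − (n−ρ)) ≥ ρ+1 for q' ≥ 2 and n−ρ ≥ ρ+1 ≥ 2. -/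
lemma aux_key2 (k ρ : ℝ) (hk : 1 ≤ k) (hρ : 1 ≤ ρ) :
    (k - 1) * ρ ^ 2 * (ρ + 1) / 2 + ρ * (ρ + 1) ^ 2 / 2 + (ρ + 1)
      ≤ ρ * (ρ + 1) / 2 * (k * (ρ + 1) + 2) := by
  nlinarith [mul_nonneg (by linarith : (0:ℝ) ≤ ρ + 1)
    (by nlinarith : (0:ℝ) ≤ k * ρ + ρ - 2)]

lemma aux_two_pow (m : ℕ) (h : 2 ≤ m) : m + 2 ≤ 2 ^ m := by
  induction m with
  | zero => omega
  | succ n ih =>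
    rcases Nat.lt_or_ge n 2 with h2 | h2
    · interval_cases n <;> simp_all
    · have h3 := ih h2
      have h4 : 1 ≤ 2 ^ n := Nat.one_le_two_pow
      calc n + 1 + 2 ≤ 2 ^ n + 2 ^ n := by omega
        _ = 2 ^ (n+1) := by ring



/-- Let `ρ ≥ 1`, `n+1` a multiple of `ρ+1` (so `n = k(ρ+1)+ρ` with `k = (n−ρ)/(ρ+1) ≥ 1`)
and `q = (q')^(ρ+1)` for a prime power `q'`.  Then the bound `B(n,ρ)` of the subgeometry
construction (here `ℓ(n,ρ) = ρ+1`, with coefficients `ã(ρ,j)`, `ā(n,ρ,j)`, constants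
`c̃(n,ρ) = (k−1)ρ²(ρ+1)/2`, `c̄(n,ρ) = ρ(ρ+1)²/2` and the `q' = 2` correction term)
satisfies `B(n,ρ) ≥ (ρ+1)(q^k + q^(k-1) + ⋯ + q) + (ρ+1)`, so the trivial bound
`s_q(n,ρ) ≤ (ρ+1)θ_k` is not improved. -/
theorem stmt19 (q' n ρ k : ℕ) (hρ : 1 ≤ ρ) (hk : 1 ≤ k) (hq' : IsPrimePow q')
    (hn : n = k * (ρ + 1) + ρ) :
    (∑ i ∈ Finset.Icc 1 k,
        ((ρ : ℝ) + 1) * ((ρ : ℝ) + 2) / 2 * (q' : ℝ) ^ ((k + 1 - i) * (ρ + 1)))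
      + (∑ i ∈ Finset.Icc 1 (k - 1), ∑ j ∈ Finset.Icc 1 (ρ - 1),
          ((ρ : ℝ) * ((ρ : ℝ) + 2 * (j : ℝ) + 1) - (j : ℝ) * (3 * (j : ℝ) + 1)) / 2
            * (q' : ℝ) ^ ((k + 1 - i) * (ρ + 1) - j))
      + (∑ j ∈ Finset.Icc 1 ρ,
          (((ρ : ℝ) + 1) * ((ρ : ℝ) + 2 * (j : ℝ)) - (j : ℝ) * (3 * (j : ℝ) + 1)) / 2
            * (q' : ℝ) ^ (ρ + 1 - j))
      - ((k : ℝ) - 1) * (ρ : ℝ) ^ 2 * ((ρ : ℝ) + 1) / 2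
      - (ρ : ℝ) * ((ρ : ℝ) + 1) ^ 2 / 2
      + (if q' = 2 then (1 : ℝ) else 0) *
          ((2 ^ (ρ - 1) - 1) * (∑ i ∈ Finset.Icc 1 (k - 1), (2 : ℝ) ^ ((k - i) * (ρ + 1) + 2))
            + 2 ^ (ρ + 1) - 2)
      ≥ ((ρ : ℝ) + 1) * (∑ i ∈ Finset.Icc 1 k, ((q' : ℝ) ^ (ρ + 1)) ^ i) + ((ρ : ℝ) + 1) := by
  have hq2 : (2:ℝ) ≤ (q' : ℝ) := by exact_mod_cast hq'.two_le
  have hq0 : (0:ℝ) ≤ (q' : ℝ) := by linarith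
  have hρ1 : (1:ℝ) ≤ (ρ : ℝ) := by exact_mod_cast hρ
  have hk1 : (1:ℝ) ≤ (k : ℝ) := by exact_mod_cast hk
  set S : ℝ := ∑ i ∈ Finset.Icc 1 k, ((q' : ℝ) ^ (ρ + 1)) ^ i with hSdef
  -- Rewrite the first sum
  have hA : (∑ i ∈ Finset.Icc 1 k,
        ((ρ : ℝ) + 1) * ((ρ : ℝ) + 2) / 2 * (q' : ℝ) ^ ((k + 1 - i) * (ρ + 1)))
      = ((ρ : ℝ) + 1) * ((ρ : ℝ) + 2) / 2 * S := by
    rw [hSdef, Finset.mul_sum]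
    refine Finset.sum_nbij' (fun a => k + 1 - a) (fun a => k + 1 - a) ?_ ?_ ?_ ?_ ?_
    · intro a ha; simp only [Finset.mem_Icc] at *; omega
    · intro a ha; simp only [Finset.mem_Icc] at *; omega
    · intro a ha; simp only [Finset.mem_Icc] at ha; show k + 1 - (k + 1 - a) = a; omega
    · intro a ha; simp only [Finset.mem_Icc] at ha; show k + 1 - (k + 1 - a) = a; omega
    · intro a ha
      rw [← pow_mul, Nat.mul_comm]
  -- S is at least its top term
  have hSpos : ∀ i ∈ Finset.Icc 1 k, (0:ℝ) ≤ ((q' : ℝ) ^ (ρ + 1)) ^ i := by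
    intro i _; positivity
  have hSk : ((q' : ℝ) ^ (ρ + 1)) ^ k ≤ S :=
    Finset.single_le_sum hSpos (by simp [Finset.mem_Icc, hk])
  -- lower bound the top term
  have hm : 2 ≤ k * (ρ + 1) := by nlinarith [hρ, hk]
  have hpow : ((k * (ρ + 1) : ℕ) : ℝ) + 2 ≤ ((q' : ℝ) ^ (ρ + 1)) ^ k := by
    have h1 : ((k * (ρ + 1) : ℕ) : ℝ) + 2 ≤ (2:ℝ) ^ (k * (ρ + 1)) := by
      have := aux_two_pow (k * (ρ + 1)) hm
      calc ((k * (ρ + 1) : ℕ) : ℝ) + 2 = ((k * (ρ + 1) + 2 : ℕ) : ℝ) := by push_cast; ring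
        _ ≤ ((2 ^ (k * (ρ + 1)) : ℕ) : ℝ) := by exact_mod_cast this
        _ = (2:ℝ) ^ (k * (ρ + 1)) := by push_cast; ring
    have h2 : (2:ℝ) ^ (k * (ρ + 1)) ≤ (q' : ℝ) ^ (k * (ρ + 1)) :=
      pow_le_pow_left₀ (by norm_num) hq2 _
    calc ((k * (ρ + 1) : ℕ) : ℝ) + 2 ≤ (q' : ℝ) ^ (k * (ρ + 1)) := le_trans h1 h2
      _ = ((q' : ℝ) ^ (ρ + 1)) ^ k := by rw [← pow_mul, Nat.mul_comm]
  have hS2 : (k : ℝ) * ((ρ : ℝ) + 1) + 2 ≤ S := by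
    have : ((k * (ρ + 1) : ℕ) : ℝ) = (k : ℝ) * ((ρ : ℝ) + 1) := by push_cast; ring
    linarith [le_trans hpow hSk]
  -- middle double sum is nonneg
  have hM : (0:ℝ) ≤ ∑ i ∈ Finset.Icc 1 (k - 1), ∑ j ∈ Finset.Icc 1 (ρ - 1),
      ((ρ : ℝ) * ((ρ : ℝ) + 2 * (j : ℝ) + 1) - (j : ℝ) * (3 * (j : ℝ) + 1)) / 2
        * (q' : ℝ) ^ ((k + 1 - i) * (ρ + 1) - j) := by
    refine Finset.sum_nonneg fun i _ => Finset.sum_nonneg fun j hj => ?_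
    simp only [Finset.mem_Icc] at hj
    have hj1 : (1:ℝ) ≤ (j : ℝ) := by exact_mod_cast hj.1
    have hjρ : (j : ℝ) + 1 ≤ (ρ : ℝ) := by
      have : j + 1 ≤ ρ := by omega
      exact_mod_cast this
    have hc : (0:ℝ) ≤ ((ρ : ℝ) * ((ρ : ℝ) + 2 * (j : ℝ) + 1) - (j : ℝ) * (3 * (j : ℝ) + 1)) / 2 := by
      nlinarith
    exact mul_nonneg hc (by positivity)
  -- third sum is nonneg
  have hT : (0:ℝ) ≤ ∑ j ∈ Finset.Icc 1 ρ,
      (((ρ : ℝ) + 1) * ((ρ : ℝ) + 2 * (j : ℝ)) - (j : ℝ) * (3 * (j : ℝ) + 1)) / 2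
        * (q' : ℝ) ^ (ρ + 1 - j) := by
    refine Finset.sum_nonneg fun j hj => ?_
    simp only [Finset.mem_Icc] at hj
    have hj1 : (1:ℝ) ≤ (j : ℝ) := by exact_mod_cast hj.1
    have hjρ : (j : ℝ) ≤ (ρ : ℝ) := by exact_mod_cast hj.2
    have hc : (0:ℝ) ≤ (((ρ : ℝ) + 1) * ((ρ : ℝ) + 2 * (j : ℝ)) - (j : ℝ) * (3 * (j : ℝ) + 1)) / 2 := by
      nlinarith
    exact mul_nonneg hc (by positivity)
  -- correction term is nonneg
  have hC : (0:ℝ) ≤ (if q' = 2 then (1 : ℝ) else 0) *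
      ((2 ^ (ρ - 1) - 1) * (∑ i ∈ Finset.Icc 1 (k - 1), (2 : ℝ) ^ ((k - i) * (ρ + 1) + 2))
        + 2 ^ (ρ + 1) - 2) := by
    have hx : (0:ℝ) ≤ (2 ^ (ρ - 1) - 1) * (∑ i ∈ Finset.Icc 1 (k - 1), (2 : ℝ) ^ ((k - i) * (ρ + 1) + 2))
        + 2 ^ (ρ + 1) - 2 := by
      have h1 : (1:ℝ) ≤ (2:ℝ) ^ (ρ - 1) := one_le_pow₀ (by norm_num)
      have h2 : (0:ℝ) ≤ ∑ i ∈ Finset.Icc 1 (k - 1), (2 : ℝ) ^ ((k - i) * (ρ + 1) + 2) := by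
        positivity
      have h3 : (2:ℝ) ^ 1 ≤ (2:ℝ) ^ (ρ + 1) := pow_le_pow_right₀ (by norm_num) (by omega)
      nlinarith
    split
    · linarith
    · linarith
  rw [hA]
  have hc0 : (0:ℝ) ≤ (ρ:ℝ) * ((ρ:ℝ) + 1) / 2 := by nlinarith
  have hmul := mul_le_mul_of_nonneg_left hS2 hc0
  have h5 : (1:ℝ) ≤ (k:ℝ) * (ρ:ℝ) := by nlinarith
  have key2 := aux_key2 (k:ℝ) (ρ:ℝ) hk1 hρ1
  have key : ((k:ℝ) - 1) * (ρ:ℝ) ^ 2 * ((ρ:ℝ) + 1) / 2 + (ρ:ℝ) * ((ρ:ℝ) + 1) ^ 2 / 2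
      + ((ρ:ℝ) + 1) ≤ (ρ:ℝ) * ((ρ:ℝ) + 1) / 2 * S := le_trans key2 hmul
  have hcs : ((ρ:ℝ) + 1) * ((ρ:ℝ) + 2) / 2 * S
      = ((ρ:ℝ) + 1) * S + (ρ:ℝ) * ((ρ:ℝ) + 1) / 2 * S := by ring
  linarith [hM, hT, hC, key, hcs]
end
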